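/- arXiv:2009.00755 — 2 statements merged into one kernel-verified Lean document; each statement's English description precedes it below -/
import Mathlib

section
/- For every integer a ≥ 2, the cross shape C_a = {(x,0) : −a ≤ x ≤ a} ∪ {(0,y) : −a ≤ y ≤ a} is a y-monotone shape that is not foldable with zero error: no Turning Machine (any length n, initial positions pos(m_i)=(i,0), any initial integer states) computes a target configuration with all states 0 whose set of monomer positions is a translate of C_a. -/
namespace TuringMachineFolding

/-- Points of the triangular grid, coordinatised by `ℤ × ℤ`. -/
abbrev Pt : Type := ℤ × ℤ

/-- The six triangular-grid unit vectors `x, y, w, -x, -y, -w`. -/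
def unitVecs : Set Pt :=
  {((1 : ℤ), (0 : ℤ)), (0, 1), (-1, 1), (-1, 0), (0, -1), (1, -1)}

/-- Anticlockwise rotation by `π/3`: the linear map with `ρ(1,0) = (0,1)`, `ρ(0,1) = (-1,1)`. -/
def rot : Pt → Pt := fun p => (-p.2, p.1 + p.2)

/-- Clockwise rotation by `π/3`, the inverse of `rot`. -/
def rotInv : Pt → Pt := fun p => (p.1 + p.2, -p.1)

/-- `rot` as a permutation of the grid, so that integer powers `rotE ^ t` make sense. -/
def rotE : Equiv.Perm Pt where
  toFun := rot
  invFun := rotInv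
  left_inv := by
    rintro ⟨a, b⟩
    simp only [rot, rotInv, Prod.mk.injEq]
    constructor <;> ring
  right_inv := by
    rintro ⟨a, b⟩
    simp only [rot, rotInv, Prod.mk.injEq]
    constructor <;> ring

/-- Scalar multiple of a grid vector. -/
def zsmulPt (m : ℤ) (p : Pt) : Pt := (m * p.1, m * p.2)

/-- A configuration of a Turning Machine of length `n`: states and positions of the monomers
`m_0, …, m_{n-1}` (indices `≥ n` carry irrelevant junk values), such that `pos m_0 = (0,0)`,
consecutive positions differ by one of the six unit vectors, and positions are pairwise
distinct. -/
structure Config (n : ℕ) where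
  st : ℕ → ℤ
  pos : ℕ → Pt
  pos_zero : pos 0 = (0, 0)
  step_unit : ∀ i, i + 1 < n → pos (i + 1) - pos i ∈ unitVecs
  pos_inj : ∀ i < n, ∀ j < n, pos i = pos j → i = j

/-- The direction of monomer `m_i` (meaningful for `i + 1 < n`). -/
def dir {n : ℕ} (c : Config n) (i : ℕ) : Pt := c.pos (i + 1) - c.pos i

/-- The translation vector applied to the head of `m_i` when the turning rule fires at `m_i`:
`ρ²(d_i)` for a positive state, `ρ⁻²(d_i)` for a negative state. -/
def delta {n : ℕ} (c : Config n) (i : ℕ) : Pt :=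
  if 0 < c.st i then rot (rot (dir c i)) else rotInv (rotInv (dir c i))

/-- The state sequence after applying the turning rule at monomer `i`. -/
def nextSt {n : ℕ} (c : Config n) (i : ℕ) : ℕ → ℤ := fun j =>
  if j = i then (if 0 < c.st i then c.st i - 1 else c.st i + 1) else c.st j

/-- The position sequence after applying the turning rule at monomer `i`. -/
def nextPos {n : ℕ} (c : Config n) (i : ℕ) : ℕ → Pt := fun j =>
  if i < j then c.pos j + delta c i else c.pos j

/-- The turning rule applied at monomer `i` transforms `c` into `c'`.  The requirement that
`c'` is again a `Config` (pairwise distinct positions) encodes that the move is not blocked. -/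
def StepAt {n : ℕ} (c : Config n) (i : ℕ) (c' : Config n) : Prop :=
  i < n ∧ c.st i ≠ 0 ∧ (∀ j < n, c'.st j = nextSt c i j) ∧ (∀ j < n, c'.pos j = nextPos c i j)

/-- The turning rule is applicable to monomer `i` in configuration `c`. -/
def Applicable {n : ℕ} (c : Config n) (i : ℕ) : Prop := ∃ c', StepAt c i c'

/-- Monomer `i` is blocked in `c`: nonzero state, but no applicable rule. -/
def Blocked {n : ℕ} (c : Config n) (i : ℕ) : Prop :=
  i < n ∧ c.st i ≠ 0 ∧ ¬ Applicable c i

/-- One asynchronous step of the machine. -/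
def Step {n : ℕ} (c c' : Config n) : Prop := ∃ i, StepAt c i c'

/-- `c` is reachable from `c₀` by a finite sequence of rule applications. -/
def Reachable {n : ℕ} (c₀ c : Config n) : Prop := Relation.ReflTransGen Step c₀ c

/-- No rule is applicable in `c`. -/
def Terminal {n : ℕ} (c : Config n) : Prop := ∀ i, ¬ Applicable c i

/-- `c` is permanently blocked: some state is nonzero but no monomer admits an applicable rule. -/
def PermBlocked {n : ℕ} (c : Config n) : Prop :=
  (∃ i < n, c.st i ≠ 0) ∧ Terminal c

/-- The Turning Machine with initial configuration `c₀` computes the target configuration `ct`: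
every maximal sequence of rule applications from `c₀` is finite and ends in `ct`
(configurations are compared on the meaningful indices `< n`). -/
def Computes {n : ℕ} (c₀ ct : Config n) : Prop :=
  (¬ ∃ f : ℕ → Config n, f 0 = c₀ ∧ ∀ k, Step (f k) (f (k + 1))) ∧
  ∀ c, Reachable c₀ c → Terminal c → ∀ i < n, c.st i = ct.st i ∧ c.pos i = ct.pos i

/-- The initial configuration with monomers on the x-axis, `pos m_i = (i,0)`, and
initial states `s₀`. -/
def mkInit (n : ℕ) (s₀ : ℕ → ℤ) : Config n where
  st := s₀
  pos := fun i => ((i : ℤ), 0)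
  pos_zero := by simp
  step_unit := by
    intro i _
    have h : (((i + 1 : ℕ) : ℤ), (0 : ℤ)) - (((i : ℕ) : ℤ), (0 : ℤ)) = ((1 : ℤ), (0 : ℤ)) := by
      simp only [Prod.mk_sub_mk, Prod.mk.injEq]
      constructor <;> push_cast <;> ring
    rw [h]
    simp [unitVecs]
  pos_inj := by
    intro i _ j _ h
    have h1 : ((i : ℕ) : ℤ) = ((j : ℕ) : ℤ) := congrArg Prod.fst h
    exact_mod_cast h1

/-- The initial configuration of the line-rotating Turning Machine `L^σ_n`:
`pos m_i = (i,0)`, states `σ` except the last monomer which has state `0`. -/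
def lineInit (n : ℕ) (σ : ℤ) : Config n :=
  mkInit n (fun i => if i + 1 = n then 0 else σ)

/-- `Δs`: the number of rule applications made to monomer `i` on the way from `c₀` to `c`
(each application changes the state by one, towards `0`). -/
def dS {n : ℕ} (c₀ c : Config n) (i : ℕ) : ℤ := |c₀.st i - c.st i|

/-- The set of positions occupied by a configuration. -/
def posSet {n : ℕ} (c : Config n) : Set Pt := {q | ∃ i < n, c.pos i = q}


/-- Adjacency on the triangular grid. -/
def Adj (p q : Pt) : Prop := q - p ∈ unitVecs

/-- The graph induced by the edge relation `E` on the set `S` is connected. -/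
def ConnectedIn (E : Pt → Pt → Prop) (S : Set Pt) : Prop :=
  ∀ p ∈ S, ∀ q ∈ S, Relation.ReflTransGen (fun a b => a ∈ S ∧ b ∈ S ∧ E a b) p q

/-- A shape: a finite subset of the grid whose induced graph is connected. -/
def IsShape (S : Set Pt) : Prop := S.Finite ∧ ConnectedIn Adj S

/-- `y`-monotone shape: the points of each row form a set of consecutive integers. -/
def YMonotone (S : Set Pt) : Prop :=
  ∀ j x₁ x₂ x₃ : ℤ, x₁ ≤ x₂ → x₂ ≤ x₃ → (x₁, j) ∈ S → (x₃, j) ∈ S → (x₂, j) ∈ S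

/-- Adjacency along the `x` and `y` axes only. -/
def AdjXY (p q : Pt) : Prop :=
  q - p ∈ ({((1 : ℤ), (0 : ℤ)), (-1, 0), (0, 1), (0, -1)} : Set Pt)

/-- `xy`-connected: connected using only `±x` and `±y` edges. -/
def XYConnected (S : Set Pt) : Prop := ConnectedIn AdjXY S

/-- The perimeter of a shape: its points having a neighbour outside the shape. -/
def perimeter (S : Set Pt) : Set Pt := {p ∈ S | ∃ v ∈ unitVecs, p + v ∉ S}

/-- Translation of a set of points. -/
def translate (t : Pt) (S : Set Pt) : Set Pt := (fun p => p + t) '' S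

/-- The cardinality of the symmetric difference of two sets of points. -/
noncomputable def symmDiffCard (A B : Set Pt) : ℕ := ((A \ B) ∪ (B \ A)).ncard

/-- Error of a configuration w.r.t. a shape: the least cardinality, over all translations `t`,
of the symmetric difference of `S + t` and the set of monomer positions. -/
noncomputable def foldError {n : ℕ} (S : Set Pt) (c : Config n) : ℕ :=
  sInf {m | ∃ t : Pt, symmDiffCard (translate t S) (posSet c) = m}

/-- The allowed steps of a `yw`-chain. -/
def ywSteps : Set Pt := {((0 : ℤ), (1 : ℤ)), (-1, 1)}

/-- `c 0, …, c (k-1)` is a `yw`-separator of the `y`-monotone shape `S`: a `yw`-chain inside `S`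
from the bottommost row of `S` to the topmost row of `S`. -/
def IsYWSep (S : Set Pt) (k : ℕ) (c : ℕ → Pt) : Prop :=
  0 < k ∧ (∀ ℓ, ℓ + 1 < k → c (ℓ + 1) - c ℓ ∈ ywSteps) ∧ (∀ ℓ < k, c ℓ ∈ S) ∧
    (∀ p ∈ S, (c 0).2 ≤ p.2) ∧ (∀ p ∈ S, p.2 ≤ (c (k - 1)).2)

/-- The shape `S` scaled by a factor `2`. -/
def scale2 (S : Set Pt) : Set Pt :=
  {q | ∃ p ∈ S, ∃ a b : ℤ, (a = 0 ∨ a = 1) ∧ (b = 0 ∨ b = 1) ∧ q = (2 * p.1 + a, 2 * p.2 + b)}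

/-- The right boundary of a shape: the rightmost point of each nonempty row. -/
def rightBdry (S : Set Pt) : Set Pt := {p ∈ S | ∀ q ∈ S, q.2 = p.2 → q.1 ≤ p.1}

/-- The left boundary of a shape: the leftmost point of each nonempty row. -/
def leftBdry (S : Set Pt) : Set Pt := {p ∈ S | ∀ q ∈ S, q.2 = p.2 → p.1 ≤ q.1}

/-- The "almost rectangle" `R_{k'}` from the definition of the `1`-gap spiral. -/
def spiralRing (k : ℤ) : Set Pt :=
  (({p : Pt | (p.2 = 2 * k ∨ p.2 = -(2 * k)) ∧ -(2 * k) ≤ p.1 ∧ p.1 ≤ 2 * k - 1} ∪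
      {p : Pt | (p.1 = -(2 * k) ∨ p.1 = 2 * k - 1) ∧ -(2 * k) ≤ p.2 ∧ p.2 ≤ 2 * k}) ∪
      {(2 * k - 2, -(2 * k) + 2), (2 * k, -(2 * k)), (2 * k + 1, -(2 * k))}) \
    {(2 * k - 1, -(2 * k) + 1)}

/-- The `k`-turn `1`-gap spiral `S_k`. -/
def spiral (k : ℕ) : Set Pt := ⋃ j ∈ Finset.Icc 1 k, spiralRing (j : ℤ)

/-- The base turning numbers `t_i` of the inside-to-outside sequence. -/
def tIn (t0 : ℤ) : ℕ → ℤ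
  | 0 => t0
  | i + 1 => tIn t0 i + (if (i + 1) % 2 = 0 then 2 else 1)

/-- The inside-to-outside turning number sequence
`T_in(t₀) = [t₀]¹,[t₁]²,…,[t_{4k}]^{4k+1}, t_{4k}`. -/
def TInList (k : ℕ) (t0 : ℤ) : List ℤ :=
  ((List.range (4 * k + 1)).flatMap fun i => List.replicate (i + 1) (tIn t0 i)) ++ [tIn t0 (4 * k)]

/-- The base turning numbers `t_i` of the outside-to-inside sequence. -/
def tOut (t0 : ℤ) : ℕ → ℤ
  | 0 => t0
  | i + 1 => tOut t0 i - (if (i + 1) % 2 = 0 then 1 else 2)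

/-- The outside-to-inside turning number sequence
`T_out(t₀) = t₀,[t₀]^{4k+1},[t₁]^{4k},…,[t_{4k}]¹`. -/
def TOutList (k : ℕ) (t0 : ℤ) : List ℤ :=
  t0 :: ((List.range (4 * k + 1)).flatMap fun i => List.replicate (4 * k + 1 - i) (tOut t0 i))

/-- The cross shape with arm length `a`. -/
def cross (a : ℤ) : Set Pt :=
  {p : Pt | p.2 = 0 ∧ -a ≤ p.1 ∧ p.1 ≤ a} ∪ {p : Pt | p.1 = 0 ∧ -a ≤ p.2 ∧ p.2 ≤ a}

/-- A positive zig-zag path: pairwise distinct points with steps in `{x, -x, y, w}`. -/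
def PosZigZag (n : ℕ) (p : ℕ → Pt) : Prop :=
  (∀ i < n, ∀ j < n, p i = p j → i = j) ∧
    ∀ i, i + 1 < n → p (i + 1) - p i ∈ ({((1 : ℤ), (0 : ℤ)), (-1, 0), (0, 1), (-1, 1)} : Set Pt)

/-- A negative zig-zag path: pairwise distinct points with steps in `{x, -x, -y, -w}`. -/
def NegZigZag (n : ℕ) (p : ℕ → Pt) : Prop :=
  (∀ i < n, ∀ j < n, p i = p j → i = j) ∧
    ∀ i, i + 1 < n → p (i + 1) - p i ∈ ({((1 : ℤ), (0 : ℤ)), (-1, 0), (0, -1), (1, -1)} : Set Pt)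

/-! The positions of a configuration form a self-avoiding path through every occupied point, and
every point other than its two ends has two distinct neighbours on it (its predecessor and its
successor). So the occupied set has at most two points with at most one neighbour in it. For
`a ≥ 2` the cross has three such points, its tips `(a,0)`, `(-a,0)` and `(0,a)`; for `a = 1` the
`w`-step joins `(1,0)` to `(0,1)`. -/

lemma neg_mem_unitVecs {v : Pt} (h : v ∈ unitVecs) : -v ∈ unitVecs := by
  simp only [unitVecs, Set.mem_insert_iff, Set.mem_singleton_iff] at h ⊢
  rcases h with rfl | rfl | rfl | rfl | rfl | rfl <;> simp

lemma adj_symm {p q : Pt} (h : Adj p q) : Adj q p := by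
  simpa only [Adj, neg_sub] using neg_mem_unitVecs h

lemma connectedIn_of_forall_reflTransGen {E : Pt → Pt → Prop} (hE : ∀ p q, E p q → E q p)
    {S : Set Pt} {o : Pt}
    (h : ∀ q ∈ S, Relation.ReflTransGen (fun a b => a ∈ S ∧ b ∈ S ∧ E a b) o q) :
    ConnectedIn E S := by
  have : Std.Symm (fun a b => a ∈ S ∧ b ∈ S ∧ E a b) :=
    ⟨fun _ _ ⟨ha, hb, hab⟩ => ⟨hb, ha, hE _ _ hab⟩⟩
  intro p hp q hq
  exact (Std.Symm.symm _ _ (h p hp)).trans (h q hq)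

lemma reflTransGen_adj_of_segment {S : Set Pt} {p v : Pt} (hv : v ∈ unitVecs) (m : ℕ)
    (hS : ∀ k ≤ m, p + (k : ℤ) • v ∈ S) :
    Relation.ReflTransGen (fun a b => a ∈ S ∧ b ∈ S ∧ Adj a b) p (p + (m : ℤ) • v) := by
  induction m with
  | zero => simpa using Relation.ReflTransGen.refl
  | succ m ih =>
    refine (ih fun k hk => hS k (by omega)).tail ⟨hS m (by omega), hS (m + 1) le_rfl, ?_⟩
    simpa [Adj, add_smul, ← add_assoc] using hv

def leaves (S : Set Pt) : Set Pt := {p ∈ S | {v ∈ unitVecs | p + v ∈ S}.Subsingleton}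

lemma add_mem_leaves_translate {S : Set Pt} {p : Pt} (t : Pt) (hp : p ∈ leaves S) :
    p + t ∈ leaves (translate t S) := by
  have hnbrs : {v ∈ unitVecs | p + t + v ∈ translate t S} = {v ∈ unitVecs | p + v ∈ S} := by
    ext v
    simp only [translate, Set.mem_image, add_left_inj, exists_eq_right, Set.mem_ofPred_eq,
      add_right_comm p t v]
  exact ⟨⟨p, hp.1, rfl⟩, hnbrs ▸ hp.2⟩

lemma Config.leaves_posSet_subset {n : ℕ} (c : Config n) :
    leaves (posSet c) ⊆ {c.pos 0, c.pos (n - 1)} := by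
  rintro _ ⟨⟨i, hi, rfl⟩, hsub⟩
  rcases Nat.eq_zero_or_pos i with rfl | hi0
  · exact Or.inl rfl
  by_cases hlast : i = n - 1
  · exact Or.inr (hlast ▸ rfl)
  obtain ⟨j, rfl⟩ : ∃ j, i = j + 1 := ⟨i - 1, by omega⟩
  have hback : c.pos j - c.pos (j + 1) ∈ unitVecs := by
    simpa only [neg_sub] using neg_mem_unitVecs (c.step_unit j hi)
  have hfwd : c.pos (j + 2) - c.pos (j + 1) ∈ unitVecs := c.step_unit (j + 1) (by omega)
  have hvw := hsub ⟨hback, j, by omega, by abel⟩ ⟨hfwd, j + 2, by omega, by abel⟩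
  have := c.pos_inj j (by omega) (j + 2) (by omega) (sub_left_inj.mp hvw)
  omega

lemma cross_finite (a : ℤ) : (cross a).Finite := by
  refine (Set.finite_Icc ((-a, -a) : Pt) (a, a)).subset ?_
  rintro ⟨x, y⟩ h
  simp only [cross, Set.mem_union, Set.mem_ofPred_eq] at h
  simp only [Set.mem_Icc, Prod.mk_le_mk]
  omega

lemma cross_connectedIn (a : ℤ) : ConnectedIn Adj (cross a) := by
  refine connectedIn_of_forall_reflTransGen (fun _ _ => adj_symm) (o := (0, 0)) ?_
  rintro ⟨x, y⟩ (⟨rfl, hx⟩ | ⟨rfl, hy⟩)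
  · obtain ⟨m, rfl | rfl⟩ := Int.eq_nat_or_neg x
    · simpa using reflTransGen_adj_of_segment (p := (0, 0)) (v := (1, 0)) (by simp [unitVecs]) m
        fun k hk => by simp [cross]; omega
    · simpa using reflTransGen_adj_of_segment (p := (0, 0)) (v := (-1, 0)) (by simp [unitVecs]) m
        fun k hk => by simp [cross]; omega
  · obtain ⟨m, rfl | rfl⟩ := Int.eq_nat_or_neg y
    · simpa using reflTransGen_adj_of_segment (p := (0, 0)) (v := (0, 1)) (by simp [unitVecs]) m
        fun k hk => by simp [cross]; omega
    · simpa using reflTransGen_adj_of_segment (p := (0, 0)) (v := (0, -1)) (by simp [unitVecs]) m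
        fun k hk => by simp [cross]; omega

lemma cross_yMonotone (a : ℤ) : YMonotone (cross a) := by
  intro j x₁ x₂ x₃ h₁₂ h₂₃ h₁ h₃
  simp only [cross, Set.mem_union, Set.mem_ofPred_eq] at h₁ h₃ ⊢
  omega

lemma mem_leaves_of_forall_eq {S : Set Pt} {p : Pt} (u : Pt) (hp : p ∈ S)
    (h : ∀ v ∈ unitVecs, p + v ∈ S → v = u) : p ∈ leaves S :=
  ⟨hp, Set.subsingleton_of_forall_eq u fun v hv => h v hv.1 hv.2⟩

lemma tips_mem_leaves_cross {a : ℤ} (ha : 2 ≤ a) :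
    (a, 0) ∈ leaves (cross a) ∧ (-a, 0) ∈ leaves (cross a) ∧ (0, a) ∈ leaves (cross a) := by
  refine ⟨mem_leaves_of_forall_eq (-1, 0) ?_ ?_, mem_leaves_of_forall_eq (1, 0) ?_ ?_,
    mem_leaves_of_forall_eq (0, -1) ?_ ?_⟩ <;>
  simp [cross, unitVecs] <;> omega

/-- For every `a ≥ 2`, the cross shape is a `y`-monotone shape that is not
foldable with zero error: no Turning Machine computes a target configuration, with all states
`0`, whose set of positions is a translate of the cross. -/
theorem cross_not_foldable (a : ℤ) (ha : 2 ≤ a) :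
    (IsShape (cross a) ∧ YMonotone (cross a)) ∧
    ¬ ∃ (n : ℕ) (s₀ : ℕ → ℤ) (ct : Config n) (t : Pt),
        Computes (mkInit n s₀) ct ∧ (∀ i < n, ct.st i = 0) ∧
        posSet ct = translate t (cross a) := by
  refine ⟨⟨⟨cross_finite a, cross_connectedIn a⟩, cross_yMonotone a⟩, ?_⟩
  rintro ⟨n, s₀, ct, t, -, -, hpos⟩
  have hends : ∀ p ∈ leaves (cross a), p + t = ct.pos 0 ∨ p + t = ct.pos (n - 1) := fun p hp =>
    ct.leaves_posSet_subset (hpos ▸ add_mem_leaves_translate t hp)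
  obtain ⟨hright, hleft, htop⟩ := tips_mem_leaves_cross ha
  rcases hends _ hright with h₁ | h₁ <;> rcases hends _ hleft with h₂ | h₂ <;>
    rcases hends _ htop with h₃ | h₃ <;>
    simp only [Prod.ext_iff, Prod.fst_add, Prod.snd_add] at h₁ h₂ h₃ <;> omega

end TuringMachineFolding
end

section
/- Let 1 ≤ s ≤ 4, let c be a reachable configuration of the line-rotating Turning Machine L^s_n, let m_i be a blocked monomer in c, and let m_j, m_k be a pair of monomers blocking the movement of m_i, i.e., k ≤ i < j and pos(m_k) = pos(m_j) + ρ²(d_i) where d_i is the direction of m_i. Then among the monomers m_k, m_{k+1}, …, m_{j−1}, the number of monomers that are not blocked is at least half the number of monomers that are blocked. -/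
namespace TuringMachineFolding

def rhoPow (t : ℤ) : Pt :=
  if t % 6 = 0 then (1,0) else if t % 6 = 1 then (0,1) else if t % 6 = 2 then (-1,1)
  else if t % 6 = 3 then (-1,0) else if t % 6 = 4 then (0,-1) else (1,-1)
lemma six_cases (t : ℤ) : t % 6 = 0 ∨ t % 6 = 1 ∨ t % 6 = 2 ∨ t % 6 = 3 ∨ t % 6 = 4 ∨ t % 6 = 5 := by omega
lemma rhoPow_rot (t : ℤ) : rhoPow (t + 1) = rot (rhoPow t) := by
  rcases six_cases t with h|h|h|h|h|h <;>
  · rw [rhoPow, rhoPow, show (t+1) % 6 = (t%6+1)%6 by omega]; simp [h, rot]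
lemma rhoPow_add_two (t : ℤ) : rhoPow t + rhoPow (t + 2) = rhoPow (t + 1) := by
  rcases six_cases t with h|h|h|h|h|h <;>
  · rw [rhoPow, rhoPow, rhoPow, show (t+1) % 6 = (t%6+1)%6 by omega,
      show (t+2) % 6 = (t%6+2)%6 by omega]; simp [h]
lemma rhoPow_add_three (t : ℤ) : rhoPow (t + 3) = - rhoPow t := by
  rcases six_cases t with h|h|h|h|h|h <;>
  · rw [rhoPow, rhoPow, show (t+3) % 6 = (t%6+3)%6 by omega]; simp [h]
lemma rhoPow_inj {a b : ℤ} (h : rhoPow a = rhoPow b) : a % 6 = b % 6 := by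
  rcases six_cases a with ha|ha|ha|ha|ha|ha <;> rcases six_cases b with hb|hb|hb|hb|hb|hb <;>
    simp [rhoPow, ha, hb, Prod.ext_iff] at h ⊢
lemma rhoPow_ne_zero (t : ℤ) : rhoPow t ≠ 0 := by
  rcases six_cases t with h|h|h|h|h|h <;> simp [rhoPow, h, Prod.ext_iff]
lemma rhoPow_vals {t : ℤ} (h0 : 0 ≤ t) (h4 : t ≤ 4) :
    (t = 0 ∧ rhoPow t = (1,0)) ∨ (t = 1 ∧ rhoPow t = (0,1)) ∨ (t = 2 ∧ rhoPow t = (-1,1))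
    ∨ (t = 3 ∧ rhoPow t = (-1,0)) ∨ (t = 4 ∧ rhoPow t = (0,-1)) := by
  have h : t = 0 ∨ t = 1 ∨ t = 2 ∨ t = 3 ∨ t = 4 := by omega
  rcases h with h|h|h|h|h <;> subst h <;> simp [rhoPow]
lemma rhoPow_neg_of {a b : ℤ} (h : a = b + 3 ∨ b = a + 3) : rhoPow a = - rhoPow b := by
  rcases h with h|h
  · rw [h, rhoPow_add_three]
  · rw [h, rhoPow_add_three]; simp

/-- closed lattice curve with lifts in `[0,4]` and cyclic lift-differences in `[-2,2]` -/
structure CCurve where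
  L : ℕ
  f : ℤ → Pt
  al : ℤ → ℤ
  hL : 1 ≤ L
  hperf : ∀ i, f (i + L) = f i
  hpera : ∀ i, al (i + L) = al i
  hinj : ∀ i j, f i = f j → (L:ℤ) ∣ i - j
  hedge : ∀ i, f (i + 1) - f i = rhoPow (al i)
  hrange : ∀ i, 0 ≤ al i ∧ al i ≤ 4
  hdiff : ∀ i, |al (i + 1) - al i| ≤ 2

lemma dvd_small {n m : ℤ} (h : n ∣ m) (h2 : |m| < n) : m = 0 := by
  have hn : 0 < n := lt_of_le_of_lt (abs_nonneg _) h2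
  rcases h with ⟨c, rfl⟩
  rcases lt_trichotomy c 0 with hc|hc|hc
  · have h3 : n * c ≤ -n := by nlinarith
    have h4 := neg_abs_le (n * c)
    linarith
  · simp [hc]
  · have h3 : n ≤ n * c := by nlinarith
    have h4 := le_abs_self (n * c)
    linarith

namespace CCurve
variable (C : CCurve)

lemma f_shift : ∀ (n : ℤ) (i : ℤ), C.f (i + n * C.L) = C.f i := by
  intro n
  induction n using Int.induction_on with
  | zero => simp
  | succ k ih => intro i
                 have : i + (k+1) * C.L = (i + k * C.L) + C.L := by ring
                 rw [this, C.hperf, ih]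
  | pred k ih => intro i
                 have : (i + (-k-1) * C.L) + C.L = i + (-(k:ℤ)) * C.L := by ring
                 have h2 := C.hperf (i + (-k-1) * C.L)
                 rw [this] at h2
                 rw [show i + (-(k:ℤ)-1) * C.L = i + (-k-1) * C.L by ring, ← h2, ih]

lemma al_shift : ∀ (n : ℤ) (i : ℤ), C.al (i + n * C.L) = C.al i := by
  intro n
  induction n using Int.induction_on with
  | zero => simp
  | succ k ih => intro i
                 have : i + (k+1) * C.L = (i + k * C.L) + C.L := by ring
                 rw [this, C.hpera, ih]
  | pred k ih => intro i
                 have : (i + (-k-1) * C.L) + C.L = i + (-(k:ℤ)) * C.L := by ring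
                 have h2 := C.hpera (i + (-k-1) * C.L)
                 rw [this] at h2
                 rw [show i + (-(k:ℤ)-1) * C.L = i + (-k-1) * C.L by ring, ← h2, ih]

lemma f_congr {i j : ℤ} (h : (C.L:ℤ) ∣ i - j) : C.f i = C.f j := by
  rcases h with ⟨c, hc⟩
  have : i = j + c * C.L := by linarith [hc]
  rw [this, show j + c * C.L = j + c * C.L by rfl]
  have := C.f_shift c j
  rw [show j + c * (C.L:ℤ) = j + c * C.L by ring] at this
  exact this

lemma al_congr {i j : ℤ} (h : (C.L:ℤ) ∣ i - j) : C.al i = C.al j := by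
  rcases h with ⟨c, hc⟩
  have : i = j + c * C.L := by linarith [hc]
  rw [this]
  exact C.al_shift c j

/-- rotation of a closed curve -/
def rotC (k : ℤ) : CCurve where
  L := C.L
  f := fun i => C.f (i + k)
  al := fun i => C.al (i + k)
  hL := C.hL
  hperf := fun i => by
    show C.f (i + C.L + k) = C.f (i + k)
    rw [show i + (C.L:ℤ) + k = i + k + C.L by ring, C.hperf]
  hpera := fun i => by
    show C.al (i + C.L + k) = C.al (i + k)
    rw [show i + (C.L:ℤ) + k = i + k + C.L by ring, C.hpera]
  hinj := fun i j h => by have := C.hinj _ _ h; simpa using this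
  hedge := fun i => by
    show C.f (i + 1 + k) - C.f (i + k) = rhoPow (C.al (i + k))
    rw [show i + 1 + k = i + k + 1 by ring, C.hedge]
  hrange := fun i => C.hrange (i + k)
  hdiff := fun i => by
    show |C.al (i + 1 + k) - C.al (i + k)| ≤ 2
    rw [show i + 1 + k = i + k + 1 by ring]
    exact C.hdiff (i + k)


end CCurve

/-- no curve of length ≤ 3 -/
lemma no_small (C : CCurve) (h : C.L ≤ 3) : False := by
  interval_cases h' : C.L
  · exact absurd C.hL (by omega)
  · -- L = 1
    have e : C.f 1 = C.f 0 := by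
      have h1 := C.hperf 0; rw [h'] at h1; norm_num at h1; exact h1
    have h2 := C.hedge 0
    norm_num at h2
    rw [e] at h2
    exact rhoPow_ne_zero _ (by rw [← h2]; ring)
  · -- L = 2
    have hper := C.hperf 0
    rw [h'] at hper
    have h0 := C.hedge 0
    have h1 := C.hedge 1
    norm_num at hper h0 h1
    have hsum : rhoPow (C.al 0) + rhoPow (C.al 1) = 0 := by
      have : (C.f 1 - C.f 0) + (C.f 2 - C.f 1) = 0 := by rw [hper]; ring
      rw [h0, h1] at this; linear_combination this
    have hneg : rhoPow (C.al 1) = - rhoPow (C.al 0) := by linear_combination hsum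
    have : rhoPow (C.al 1) = rhoPow (C.al 0 + 3) := by rw [rhoPow_add_three]; exact hneg
    have hmod := rhoPow_inj this
    have hd := C.hdiff 0
    have hr0 := C.hrange 0
    have hr1 := C.hrange 1
    rw [abs_le] at hd
    norm_num at hd
    omega
  · -- L = 3
    have hper := C.hperf 0
    rw [h'] at hper
    have h0 := C.hedge 0
    have h1 := C.hedge 1
    have h2 := C.hedge 2
    norm_num at hper h0 h1 h2
    have hsum : rhoPow (C.al 0) + rhoPow (C.al 1) + rhoPow (C.al 2) = 0 := by
      have : (C.f 1 - C.f 0) + (C.f 2 - C.f 1) + (C.f 3 - C.f 2) = 0 := by rw [hper]; ring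
      rw [h0, h1, h2] at this; linear_combination this
    have hd0 := C.hdiff 0
    have hd1 := C.hdiff 1
    have hd2 := C.hdiff 2
    have hala : C.al 3 = C.al 0 := by
      have h3 := C.hpera 0
      rw [h'] at h3; norm_num at h3; exact h3
    rw [show (2:ℤ) + 1 = 3 by norm_num, hala] at hd2
    rw [abs_le] at hd0 hd1 hd2
    norm_num at hd0 hd1 hd2
    have hr0 := C.hrange 0
    have hr1 := C.hrange 1
    have hr2 := C.hrange 2
    rcases rhoPow_vals hr0.1 hr0.2 with ⟨ha,ea⟩|⟨ha,ea⟩|⟨ha,ea⟩|⟨ha,ea⟩|⟨ha,ea⟩ <;>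
      rcases rhoPow_vals hr1.1 hr1.2 with ⟨hb,eb⟩|⟨hb,eb⟩|⟨hb,eb⟩|⟨hb,eb⟩|⟨hb,eb⟩ <;>
      rcases rhoPow_vals hr2.1 hr2.2 with ⟨hc,ec⟩|⟨hc,ec⟩|⟨hc,ec⟩|⟨hc,ec⟩|⟨hc,ec⟩ <;>
      rw [ea, eb, ec] at hsum <;> simp [Prod.ext_iff] at hsum <;> omega

/-- shifting the index of a periodic function does not change the sum over a period -/
lemma sum_shift_one {L : ℕ} (g : ℤ → ℤ) (hg : ∀ i, g (i + L) = g i) :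
    ∑ i ∈ Finset.range L, g ((i:ℤ) + 1) = ∑ i ∈ Finset.range L, g (i:ℤ) := by
  have htel : ∑ i ∈ Finset.range L, (g ((i:ℤ) + 1) - g (i:ℤ)) = g (L:ℤ) - g 0 := by
    have := Finset.sum_range_sub (fun i : ℕ => g (i:ℤ)) L
    simpa [Nat.cast_succ] using this
  have hgl : g (L:ℤ) = g 0 := by have := hg 0; simpa using this
  have := Finset.sum_sub_distrib (s := Finset.range L)
    (f := fun i : ℕ => g ((i:ℤ)+1)) (g := fun i : ℕ => g (i:ℤ))
  rw [this] at htel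
  rw [hgl] at htel
  omega

lemma sum_shift {L : ℕ} : ∀ (k : ℤ) (g : ℤ → ℤ), (∀ i, g (i + L) = g i) →
    ∑ i ∈ Finset.range L, g ((i:ℤ) + k) = ∑ i ∈ Finset.range L, g (i:ℤ) := by
  intro k
  induction k using Int.induction_on with
  | zero => simp
  | succ k ih =>
    intro g hg
    have step := sum_shift_one (fun z => g (z + k)) (fun i => by
      show g (i + (L:ℤ) + k) = g (i + k)
      rw [show i + (L:ℤ) + k = (i + k) + L by ring, hg])
    have e1 : ∑ i ∈ Finset.range L, g ((i:ℤ) + (k+1)) = ∑ i ∈ Finset.range L, g (((i:ℤ) + 1) + k) := by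
      apply Finset.sum_congr rfl; intro x _; ring_nf
    rw [e1]
    rw [step]
    exact ih g hg
  | pred k ih =>
    intro g hg
    have step := sum_shift_one (fun z => g (z + (-(k:ℤ) - 1))) (fun i => by
      show g (i + (L:ℤ) + (-(k:ℤ) - 1)) = g (i + (-(k:ℤ) - 1))
      rw [show i + (L:ℤ) + (-(k:ℤ)-1) = (i + (-(k:ℤ)-1)) + L by ring, hg])
    have e1 : ∑ i ∈ Finset.range L, g ((i:ℤ) + 1 + (-(k:ℤ) - 1)) = ∑ i ∈ Finset.range L, g ((i:ℤ) + -(k:ℤ)) := by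
      apply Finset.sum_congr rfl; intro x _; ring_nf
    have goal2 : ∑ i ∈ Finset.range L, g ((i:ℤ) + (-(k:ℤ) - 1)) = ∑ i ∈ Finset.range L, g ((i:ℤ)) := by
      rw [← step, e1]
      exact ih g hg
    exact goal2


lemma emod_bounds {M : ℤ} (hM : 0 < M) (i : ℤ) : 0 ≤ i % M ∧ i % M < M :=
  ⟨Int.emod_nonneg i (ne_of_gt hM), Int.emod_lt_of_pos i hM⟩

lemma emod_dvd_sub (M i : ℤ) : M ∣ i - i % M :=
  ⟨i / M, by rw [Int.emod_def]; ring⟩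

lemma emod_succ {M : ℤ} (hM : 2 ≤ M) (i : ℤ) :
    (i + 1) % M = if i % M = M - 1 then 0 else i % M + 1 := by
  obtain ⟨hr0, hr1⟩ := emod_bounds (by omega : (0:ℤ) < M) i
  have h1 : (i + 1) % M = (i % M + 1) % M := by
    conv_lhs => rw [Int.add_emod]
    rw [Int.emod_eq_of_lt (by norm_num : (0:ℤ) ≤ 1) (by omega : (1:ℤ) < M)]
  by_cases h : i % M = M - 1
  · rw [h1, h, if_pos rfl, show M - 1 + 1 = M by ring, Int.emod_self]
  · rw [h1, if_neg h, Int.emod_eq_of_lt (by omega) (by omega)]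

lemma emod_add_self (M i : ℤ) : (i + M) % M = i % M := by
  simpa using Int.add_mul_emod_self_left (a := i) (b := M) (c := 1)

/-- cutting a ±2 corner located at the last two edges -/
lemma cutC (C : CCurve) (hL : 4 ≤ C.L)
    (hcor : |C.al ((C.L:ℤ) - 1) - C.al ((C.L:ℤ) - 2)| = 2) :
    ∃ C' : CCurve, C'.L + 1 = C.L := by
  set L := C.L with hLdef
  set β := C.al ((L:ℤ) - 2) with hβ
  set γ := C.al ((L:ℤ) - 1) with hγ
  have hβr := C.hrange ((L:ℤ)-2)
  have hγr := C.hrange ((L:ℤ)-1)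
  rw [abs_eq (by norm_num)] at hcor
  set mid := min β γ + 1 with hmid
  have hc2 : γ = β + 2 ∨ β = γ + 2 := by omega
  have hmid1 : |mid - β| = 1 ∧ |mid - γ| = 1 := by
    rcases hc2 with h|h <;> rw [hmid] <;> constructor <;>
      (first | rw [min_eq_left (by omega)] | rw [min_eq_right (by omega)]) <;>
      (rw [abs_eq (by norm_num)]; omega)
  have hmidr : 0 ≤ mid ∧ mid ≤ 4 := by
    rcases hc2 with h|h <;> rw [hmid] <;> omega
  have hmidsum : rhoPow β + rhoPow γ = rhoPow mid := by
    rcases hc2 with h|h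
    · rw [hmid, min_eq_left (by omega), h, rhoPow_add_two]
    · rw [hmid, min_eq_right (by omega), h, add_comm, rhoPow_add_two]
  set M := (L:ℤ) - 1 with hMdef
  have hM2 : 2 ≤ M := by omega
  have hM0 : (0:ℤ) < M := by omega
  -- the key edge identity: f L - f (L-2) = rhoPow mid
  have hf0L : C.f 0 = C.f (L:ℤ) := by
    have := C.hperf 0; rw [show (0:ℤ) + (L:ℤ) = (L:ℤ) by ring] at this; exact this.symm
  have e1 := C.hedge ((L:ℤ)-2)
  rw [show (L:ℤ)-2+1 = (L:ℤ)-1 by ring] at e1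
  have e2 := C.hedge ((L:ℤ)-1)
  rw [show (L:ℤ)-1+1 = (L:ℤ) by ring] at e2
  have hkey : C.f (L:ℤ) - C.f ((L:ℤ)-2) = rhoPow mid := by
    rw [← hmidsum, ← e1, ← e2]; ring
  have hal0 : C.al (L:ℤ) = C.al 0 := by
    have := C.hpera 0; rw [show (0:ℤ) + (L:ℤ) = (L:ℤ) by ring] at this; exact this
  have hcast : ((L - 1 : ℕ) : ℤ) = M := by rw [hMdef]; omega
  refine ⟨⟨L - 1, fun i => C.f (i % M), fun i => if i % M = (L:ℤ) - 2 then mid else C.al (i % M),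
    by omega, ?_, ?_, ?_, ?_, ?_, ?_⟩, by show L - 1 + 1 = L; omega⟩
  · intro i
    show C.f ((i + ((L-1:ℕ):ℤ)) % M) = C.f (i % M)
    rw [hcast, emod_add_self]
  · intro i
    show (if (i + ((L-1:ℕ):ℤ)) % M = (L:ℤ) - 2 then mid else C.al ((i + ((L-1:ℕ):ℤ)) % M))
      = (if i % M = (L:ℤ) - 2 then mid else C.al (i % M))
    rw [hcast, emod_add_self]
  · intro i j h
    have h2 := C.hinj _ _ h
    obtain ⟨hi0, hi1⟩ := emod_bounds hM0 i
    obtain ⟨hj0, hj1⟩ := emod_bounds hM0 j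
    have h3 : i % M - j % M = 0 := dvd_small h2 (by rw [abs_lt]; omega)
    have h4 := emod_dvd_sub M i
    have h5 := emod_dvd_sub M j
    rw [hcast]
    have : i - j = (i - i % M) - (j - j % M) + (i % M - j % M) := by ring
    rw [this, h3]
    exact dvd_add (dvd_sub h4 h5) (dvd_zero M)
  · intro i
    obtain ⟨hi0, hi1⟩ := emod_bounds hM0 i
    have hsucc := emod_succ hM2 i
    by_cases h : i % M = M - 1
    · rw [h, if_pos rfl] at hsucc
      show C.f ((i+1) % M) - C.f (i % M) = rhoPow (if i % M = (L:ℤ) - 2 then mid else C.al (i % M))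
      rw [hsucc, h, if_pos (by omega : M - 1 = (L:ℤ) - 2)]
      rw [show M - 1 = (L:ℤ) - 2 by omega]
      calc C.f (0 % M) - C.f ((L:ℤ)-2) = C.f 0 - C.f ((L:ℤ)-2) := by
            rw [Int.emod_eq_of_lt (by norm_num) (by omega)]
          _ = rhoPow mid := by rw [hf0L]; exact hkey
    · rw [if_neg h] at hsucc
      show C.f ((i+1) % M) - C.f (i % M) = rhoPow (if i % M = (L:ℤ) - 2 then mid else C.al (i % M))
      rw [hsucc, if_neg (by omega : ¬ i % M = (L:ℤ) - 2)]
      exact C.hedge (i % M)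
  · intro i
    by_cases h : i % M = (L:ℤ) - 2
    · show 0 ≤ (if i % M = (L:ℤ) - 2 then mid else C.al (i % M)) ∧
        (if i % M = (L:ℤ) - 2 then mid else C.al (i % M)) ≤ 4
      rw [if_pos h]; exact hmidr
    · show 0 ≤ (if i % M = (L:ℤ) - 2 then mid else C.al (i % M)) ∧
        (if i % M = (L:ℤ) - 2 then mid else C.al (i % M)) ≤ 4
      rw [if_neg h]; exact C.hrange _
  · intro i
    obtain ⟨hi0, hi1⟩ := emod_bounds hM0 i
    have hsucc := emod_succ hM2 i
    show |(if (i+1) % M = (L:ℤ) - 2 then mid else C.al ((i+1) % M)) -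
          (if i % M = (L:ℤ) - 2 then mid else C.al (i % M))| ≤ 2
    by_cases h : i % M = M - 1
    · -- seam pair (mid, al 0)
      rw [h, if_pos rfl] at hsucc
      rw [hsucc, if_neg (by omega : ¬ (0:ℤ) = (L:ℤ) - 2), if_pos (by omega : i % M = (L:ℤ) - 2)]
      -- need |C.al 0 - mid| ≤ 2
      have h2 := C.hdiff ((L:ℤ)-1)
      rw [show (L:ℤ)-1+1 = (L:ℤ) by ring, hal0, ← hγ] at h2
      by_contra hcon
      have h3 : |C.al 0 - mid| = 3 := by
        rw [abs_le] at h2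
        rw [abs_le] at hcon
        push_neg at hcon
        obtain ⟨m1, m2⟩ := hmid1
        rw [abs_eq (by norm_num : (0:ℤ) ≤ 1)] at m2
        rw [abs_eq (by norm_num : (0:ℤ) ≤ 3)]
        omega
      have h4 : rhoPow (C.al 0) = - rhoPow mid := by
        apply rhoPow_neg_of
        rw [abs_eq (by norm_num)] at h3
        omega
      have h5 := C.hedge 0
      norm_num at h5
      rw [h4] at h5
      have h6 : C.f 1 = C.f ((L:ℤ)-2) := by
        have : C.f 1 = C.f 0 - rhoPow mid := by linear_combination h5
        rw [this, hf0L]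
        linear_combination hkey
      have h7 := C.hinj _ _ h6
      have h8 : (1 : ℤ) - ((L:ℤ)-2) = 3 - L := by ring
      rw [h8] at h7
      have h9 : (L:ℤ) ∣ 3 := by
        have : (3:ℤ) = (3 - L) + L := by ring
        rw [this]
        exact dvd_add h7 (dvd_refl _)
      have := dvd_small h9 (by rw [abs_lt]; constructor <;> omega)
      omega
    · rw [if_neg h] at hsucc
      rw [hsucc]
      by_cases h2 : i % M = M - 2
      · -- pair (al (L-3), mid)
        rw [if_pos (by omega : i % M + 1 = (L:ℤ) - 2), if_neg (by omega : ¬ i % M = (L:ℤ) - 2)]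
        rw [show i % M = (L:ℤ) - 3 by omega]
        have h3 := C.hdiff ((L:ℤ)-3)
        rw [show (L:ℤ)-3+1 = (L:ℤ)-2 by ring, ← hβ] at h3
        by_contra hcon
        have h4 : |mid - C.al ((L:ℤ)-3)| = 3 := by
          rw [abs_le] at h3
          rw [abs_le] at hcon
          push_neg at hcon
          obtain ⟨m1, m2⟩ := hmid1
          rw [abs_eq (by norm_num : (0:ℤ) ≤ 1)] at m1
          rw [abs_eq (by norm_num : (0:ℤ) ≤ 3)]
          omega
        have h5 : rhoPow (C.al ((L:ℤ)-3)) = - rhoPow mid := by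
          apply rhoPow_neg_of
          rw [abs_eq (by norm_num)] at h4
          omega
        have h6 := C.hedge ((L:ℤ)-3)
        rw [show (L:ℤ)-3+1 = (L:ℤ)-2 by ring, h5] at h6
        have h7 : C.f ((L:ℤ)-3) = C.f (L:ℤ) := by
          have : C.f ((L:ℤ)-3) = C.f ((L:ℤ)-2) + rhoPow mid := by linear_combination -h6
          rw [this]
          linear_combination -hkey
        have h8 := C.hinj _ _ h7
        have h9 : ((L:ℤ)-3) - (L:ℤ) = -3 := by ring
        rw [h9] at h8
        have := dvd_small h8 (by rw [abs_lt]; constructor <;> omega)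
        omega
      · -- interior pair
        rw [if_neg (by omega : ¬ i % M + 1 = (L:ℤ) - 2), if_neg (by omega : ¬ i % M = (L:ℤ) - 2)]
        exact C.hdiff (i % M)


lemma rhoPow_two : rhoPow 2 = ((-1:ℤ),(1:ℤ)) := by simp [rhoPow]
lemma rhoPow_three : rhoPow 3 = ((-1:ℤ),(0:ℤ)) := by simp [rhoPow]

/-- swapping the lowest (2,3)-corner, located at vertex 1 -/
lemma swapC (C : CCurve) (hL : 4 ≤ C.L) (h20 : C.al 0 = 2) (h31 : C.al 1 = 3)
    (h1 : ∀ i, |C.al (i + 1) - C.al i| ≤ 1)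
    (hfree : ∀ j, C.f j ≠ C.f 1 - ((0:ℤ), (1:ℤ))) :
    ∃ C' : CCurve, C'.L = C.L ∧
      (∀ i : ℤ, C'.f i = if i % (C.L:ℤ) = 1 then C.f 1 - ((0:ℤ),(1:ℤ)) else C.f i) := by
  set L := C.L with hLdef
  have hLc : (4:ℤ) ≤ (L:ℤ) := by exact_mod_cast hL
  have hL2 : (2:ℤ) ≤ (L:ℤ) := by omega
  have hfe : C.f 1 - C.f 0 = rhoPow 2 := by
    have h := C.hedge 0; norm_num at h; rw [h20] at h; exact h
  have hfe1 : C.f 2 - C.f 1 = rhoPow 3 := by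
    have h := C.hedge 1; norm_num at h; rw [h31] at h; exact h
  refine ⟨⟨L, fun i => if i % (L:ℤ) = 1 then C.f 1 - ((0:ℤ),(1:ℤ)) else C.f i,
    fun i => if i % (L:ℤ) = 0 then 3 else if i % (L:ℤ) = 1 then 2 else C.al i,
    C.hL, ?_, ?_, ?_, ?_, ?_, ?_⟩, rfl, fun i => rfl⟩
  · intro i
    show (if (i + (L:ℤ)) % (L:ℤ) = 1 then C.f 1 - ((0:ℤ),(1:ℤ)) else C.f (i + (L:ℤ)))
      = (if i % (L:ℤ) = 1 then C.f 1 - ((0:ℤ),(1:ℤ)) else C.f i)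
    rw [emod_add_self, C.hperf]
  · intro i
    show (if (i + (L:ℤ)) % (L:ℤ) = 0 then 3 else if (i + (L:ℤ)) % (L:ℤ) = 1 then 2 else C.al (i + (L:ℤ)))
      = (if i % (L:ℤ) = 0 then 3 else if i % (L:ℤ) = 1 then 2 else C.al i)
    rw [emod_add_self, C.hpera]
  · intro i j h
    by_cases hi : i % (L:ℤ) = 1 <;> by_cases hj : j % (L:ℤ) = 1
    · rw [if_pos hi, if_pos hj] at h
      have d1 := emod_dvd_sub (L:ℤ) i
      have d2 := emod_dvd_sub (L:ℤ) j
      rw [hi] at d1; rw [hj] at d2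
      have : i - j = (i - 1) - (j - 1) := by ring
      rw [this]
      exact dvd_sub d1 d2
    · rw [if_pos hi, if_neg hj] at h
      exact absurd h.symm (hfree j)
    · rw [if_neg hi, if_pos hj] at h
      exact absurd h (hfree i)
    · rw [if_neg hi, if_neg hj] at h
      exact C.hinj _ _ h
  · intro i
    obtain ⟨hi0, hi1⟩ := emod_bounds (by omega : (0:ℤ) < (L:ℤ)) i
    have hsucc := emod_succ hL2 i
    show (if (i+1) % (L:ℤ) = 1 then C.f 1 - ((0:ℤ),(1:ℤ)) else C.f (i+1))
        - (if i % (L:ℤ) = 1 then C.f 1 - ((0:ℤ),(1:ℤ)) else C.f i)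
      = rhoPow (if i % (L:ℤ) = 0 then 3 else if i % (L:ℤ) = 1 then 2 else C.al i)
    by_cases h : i % (L:ℤ) = (L:ℤ) - 1
    · rw [h, if_pos rfl] at hsucc
      rw [hsucc, if_neg (by omega : ¬(0:ℤ) = 1), if_neg (by omega : ¬ i % (L:ℤ) = 1),
        if_neg (by omega : ¬ i % (L:ℤ) = 0), if_neg (by omega : ¬ i % (L:ℤ) = 1)]
      exact C.hedge i
    · rw [if_neg h] at hsucc
      by_cases h0 : i % (L:ℤ) = 0
      · rw [h0] at hsucc
        rw [hsucc, if_pos (by norm_num), if_neg (by omega : ¬ i % (L:ℤ) = 1), if_pos h0]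
        have hcongr : C.f i = C.f 0 := by
          apply C.f_congr
          have := emod_dvd_sub (L:ℤ) i
          rw [h0] at this
          simpa using this
        rw [hcongr]
        have : C.f 1 = C.f 0 + rhoPow 2 := by linear_combination hfe
        rw [this, rhoPow_two, rhoPow_three]
        simp [Prod.ext_iff]
      · by_cases hone : i % (L:ℤ) = 1
        · rw [hone] at hsucc
          rw [hsucc, if_neg (by omega : ¬(1:ℤ)+1 = 1), if_pos hone,
            if_neg h0, if_pos hone]
          have hcongr : C.f (i+1) = C.f 2 := by
            apply C.f_congr
            have := emod_dvd_sub (L:ℤ) i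
            rw [hone] at this
            have h2 : (i + 1) - 2 = i - 1 := by ring
            rw [h2]
            exact this
          rw [hcongr]
          have : C.f 2 = C.f 1 + rhoPow 3 := by linear_combination hfe1
          rw [this, rhoPow_two, rhoPow_three]
          simp [Prod.ext_iff]
        · rw [hsucc]
          rw [if_neg (by omega : ¬ i % (L:ℤ) + 1 = 1), if_neg hone, if_neg h0, if_neg hone]
          exact C.hedge i
  · intro i
    show 0 ≤ (if i % (L:ℤ) = 0 then 3 else if i % (L:ℤ) = 1 then 2 else C.al i) ∧
      (if i % (L:ℤ) = 0 then 3 else if i % (L:ℤ) = 1 then 2 else C.al i) ≤ 4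
    by_cases h0 : i % (L:ℤ) = 0
    · rw [if_pos h0]; norm_num
    · by_cases hone : i % (L:ℤ) = 1
      · rw [if_neg h0, if_pos hone]; norm_num
      · rw [if_neg h0, if_neg hone]; exact C.hrange i
  · intro i
    obtain ⟨hi0, hi1⟩ := emod_bounds (by omega : (0:ℤ) < (L:ℤ)) i
    have hsucc := emod_succ hL2 i
    show |(if (i+1) % (L:ℤ) = 0 then 3 else if (i+1) % (L:ℤ) = 1 then 2 else C.al (i+1))
        - (if i % (L:ℤ) = 0 then 3 else if i % (L:ℤ) = 1 then 2 else C.al i)| ≤ 2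
    by_cases h : i % (L:ℤ) = (L:ℤ) - 1
    · rw [h, if_pos rfl] at hsucc
      rw [hsucc, if_pos rfl, if_neg (by omega : ¬ i % (L:ℤ) = 0),
        if_neg (by omega : ¬ i % (L:ℤ) = 1)]
      have halc : C.al (i+1) = C.al 0 := by
        apply C.al_congr
        have := emod_dvd_sub (L:ℤ) i
        rw [h] at this
        have h2 : (i+1) - 0 = (i - ((L:ℤ) - 1)) + (L:ℤ) := by ring
        rw [h2]
        exact dvd_add this (dvd_refl _)
      have hd := h1 i
      rw [halc, h20] at hd
      rw [abs_le] at hd ⊢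
      omega
    · rw [if_neg h] at hsucc
      by_cases h0 : i % (L:ℤ) = 0
      · rw [h0] at hsucc
        rw [hsucc, if_neg (by norm_num : ¬(0:ℤ)+1 = 0), if_pos (by norm_num : (0:ℤ)+1 = 1),
          if_pos h0]
        norm_num
      · by_cases hone : i % (L:ℤ) = 1
        · rw [hone] at hsucc
          rw [hsucc, if_neg (by norm_num : ¬(1:ℤ)+1 = 0), if_neg (by norm_num : ¬(1:ℤ)+1 = 1),
            if_neg h0, if_pos hone]
          have halc : C.al i = C.al 1 := by
            apply C.al_congr
            have := emod_dvd_sub (L:ℤ) i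
            rw [hone] at this
            exact this
          have hd := h1 i
          rw [halc, h31] at hd
          rw [abs_le] at hd ⊢
          omega
        · rw [hsucc]
          rw [if_neg (by omega : ¬ i % (L:ℤ) + 1 = 0), if_neg (by omega : ¬ i % (L:ℤ) + 1 = 1),
            if_neg h0, if_neg hone]
          have hd := h1 i
          rw [abs_le] at hd ⊢
          omega


lemma fst_snd_edge (C : CCurve) (i : ℤ) :
    (C.f (i+1)).1 - (C.f i).1 = (rhoPow (C.al i)).1 ∧
    (C.f (i+1)).2 - (C.f i).2 = (rhoPow (C.al i)).2 := by
  have h := C.hedge i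
  have h1 := congrArg Prod.fst h
  have h2 := congrArg Prod.snd h
  simp only [Prod.fst_sub, Prod.snd_sub] at h1 h2
  exact ⟨h1, h2⟩

/-- in a curve with only ±1 turns, there is a (2,3)-corner -/
lemma exists_corner (C : CCurve) (h1 : ∀ i, |C.al (i + 1) - C.al i| ≤ 1) :
    ∃ p : ℤ, 0 ≤ p ∧ p < (C.L:ℤ) ∧ C.al (p - 1) = 2 ∧ C.al p = 3 := by
  have hne : (Finset.range C.L).Nonempty := ⟨0, Finset.mem_range.mpr (by have := C.hL; omega)⟩
  obtain ⟨b₁, hb₁mem, hb₁⟩ := Finset.exists_max_image (Finset.range C.L)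
    (fun n => (C.f (n:ℤ)).2) hne
  set T := (Finset.range C.L).filter (fun n : ℕ => (C.f (n:ℤ)).2 = (C.f (b₁:ℤ)).2) with hT
  have hTne : T.Nonempty := ⟨b₁, Finset.mem_filter.mpr ⟨hb₁mem, rfl⟩⟩
  obtain ⟨b, hbmem, hb⟩ := Finset.exists_max_image T (fun n => (C.f (n:ℤ)).1) hTne
  obtain ⟨hbrange, hbrow⟩ := Finset.mem_filter.mp hbmem
  -- global maximality
  have reduce : ∀ j : ℤ, ∃ m : ℕ, m ∈ Finset.range C.L ∧ C.f (m:ℤ) = C.f j := by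
    intro j
    have hL0 : (0:ℤ) < (C.L:ℤ) := by have := C.hL; exact_mod_cast Nat.pos_of_ne_zero (by omega)
    obtain ⟨h0, h1'⟩ := emod_bounds hL0 j
    refine ⟨(j % (C.L:ℤ)).toNat, Finset.mem_range.mpr ?_, ?_⟩
    · have : ((j % (C.L:ℤ)).toNat : ℤ) < (C.L:ℤ) := by rw [Int.toNat_of_nonneg h0]; exact h1'
      exact_mod_cast this
    · apply C.f_congr
      rw [Int.toNat_of_nonneg h0]
      have := emod_dvd_sub (C.L:ℤ) j
      have h2 : j % (C.L:ℤ) - j = -(j - j % (C.L:ℤ)) := by ring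
      rw [h2]
      exact dvd_neg.mpr this
  have hy : ∀ j : ℤ, (C.f j).2 ≤ (C.f (b:ℤ)).2 := by
    intro j
    obtain ⟨m, hm, he⟩ := reduce j
    rw [← he, hbrow]
    exact hb₁ m hm
  have hxy : ∀ j : ℤ, (C.f j).2 = (C.f (b:ℤ)).2 → (C.f j).1 ≤ (C.f (b:ℤ)).1 := by
    intro j hj
    obtain ⟨m, hm, he⟩ := reduce j
    rw [← he]
    refine hb m (Finset.mem_filter.mpr ⟨hm, ?_⟩)
    rw [he, hj, hbrow]
  set p := (b : ℤ) with hp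
  -- in-edge and out-edge components
  obtain ⟨ein1, ein2⟩ := fst_snd_edge C (p - 1)
  rw [show p - 1 + 1 = p by ring] at ein1 ein2
  obtain ⟨eout1, eout2⟩ := fst_snd_edge C p
  have hrin := C.hrange (p - 1)
  have hrout := C.hrange p
  have hyin := hy (p - 1)
  have hyout := hy (p + 1)
  have habs := h1 (p - 1)
  rw [show p - 1 + 1 = p by ring, abs_le] at habs
  have hμν : C.al (p - 1) = 2 ∧ C.al p = 3 := by
    rcases rhoPow_vals hrin.1 hrin.2 with ⟨h,e⟩|⟨h,e⟩|⟨h,e⟩|⟨h,e⟩|⟨h,e⟩ <;>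
      rcases rhoPow_vals hrout.1 hrout.2 with ⟨h',e'⟩|⟨h',e'⟩|⟨h',e'⟩|⟨h',e'⟩|⟨h',e'⟩ <;>
      rw [e] at ein1 ein2 <;> rw [e'] at eout1 eout2 <;>
      norm_num at ein1 ein2 eout1 eout2 <;>
      first
        | exact ⟨h, h'⟩
        | omega
        | (exfalso; have hx := hxy (p - 1) (by omega); omega)
        | (exfalso; have hx := hxy (p + 1) (by omega); omega)
  refine ⟨p, by rw [hp]; exact_mod_cast Nat.zero_le b, ?_, hμν.1, hμν.2⟩
  show (b:ℤ) < (C.L:ℤ)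
  exact_mod_cast Finset.mem_range.mp hbrange


lemma swap_step (C : CCurve) (hL : 4 ≤ C.L) (h1 : ∀ i, |C.al (i + 1) - C.al i| ≤ 1)
    (A : ℤ) (hA : ∀ i, A ≤ (C.f i).2) :
    ∃ C' : CCurve, C'.L = C.L ∧ (∀ i, A ≤ (C'.f i).2) ∧
      (∑ n ∈ Finset.range C'.L, ((C'.f (n:ℤ)).2 - A))
        = (∑ n ∈ Finset.range C.L, ((C.f (n:ℤ)).2 - A)) - 1 := by
  have hLc : (4:ℤ) ≤ (C.L:ℤ) := by exact_mod_cast hL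
  have hL0 : (0:ℤ) < (C.L:ℤ) := by omega
  -- the set of (2,3)-corners
  set S := (Finset.range C.L).filter
    (fun n : ℕ => C.al ((n:ℤ) - 1) = 2 ∧ C.al (n:ℤ) = 3) with hS
  have hSne : S.Nonempty := by
    obtain ⟨p, hp0, hpL, hp2, hp3⟩ := exists_corner C h1
    refine ⟨p.toNat, Finset.mem_filter.mpr ⟨Finset.mem_range.mpr ?_, ?_, ?_⟩⟩
    · have : (p.toNat : ℤ) < (C.L:ℤ) := by rw [Int.toNat_of_nonneg hp0]; exact hpL
      exact_mod_cast this
    · rw [Int.toNat_of_nonneg hp0]; exact hp2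
    · rw [Int.toNat_of_nonneg hp0]; exact hp3
  obtain ⟨p₀, hp₀mem, hmin⟩ := Finset.exists_min_image S (fun n => (C.f (n:ℤ)).2) hSne
  obtain ⟨hp₀range, hp₀2, hp₀3⟩ := Finset.mem_filter.mp hp₀mem
  set P := (p₀ : ℤ) with hP
  -- components of the corner edges
  obtain ⟨ha1, ha2⟩ := fst_snd_edge C (P - 1)
  rw [show P - 1 + 1 = P by ring, hp₀2, rhoPow_two] at ha1 ha2
  norm_num at ha1 ha2
  obtain ⟨hc1, hc2⟩ := fst_snd_edge C P
  rw [hp₀3, rhoPow_three] at hc1 hc2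
  norm_num at hc1 hc2
  -- freeness of the swap target
  have hfreeC : ∀ j : ℤ, C.f j ≠ C.f P - ((0:ℤ), (1:ℤ)) := by
    intro j hj
    have hj1 : (C.f j).1 = (C.f P).1 := by
      have := congrArg Prod.fst hj; simpa using this
    have hj2 : (C.f j).2 = (C.f P).2 - 1 := by
      have := congrArg Prod.snd hj; simpa using this
    obtain ⟨ej1, ej2⟩ := fst_snd_edge C j
    have hrj := C.hrange j
    rcases rhoPow_vals hrj.1 hrj.2 with ⟨h,e⟩|⟨h,e⟩|⟨h,e⟩|⟨h,e⟩|⟨h,e⟩ <;>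
      rw [e] at ej1 ej2 <;> norm_num at ej1 ej2
    · -- al j = 0 : the successor hits a = f (P-1), giving a +2 corner
      have heq : C.f (j+1) = C.f (P - 1) :=
        Prod.ext_iff.mpr ⟨by omega, by omega⟩
      have hd := C.hinj _ _ heq
      have halc : C.al j = C.al (P - 2) := by
        apply C.al_congr
        have h2 : j - (P - 2) = (j + 1) - (P - 1) := by ring
        rw [h2]; exact hd
      have habs := h1 (P - 2)
      rw [show P - 2 + 1 = P - 1 by ring, abs_le] at habs
      omega
    · -- al j = 1 : successor is v itself
      have heq : C.f (j+1) = C.f P :=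
        Prod.ext_iff.mpr ⟨by omega, by omega⟩
      have hd := C.hinj _ _ heq
      have hfc : C.f j = C.f (P - 1) := by
        apply C.f_congr
        have h2 : j - (P - 1) = (j + 1) - P := by ring
        rw [h2]; exact hd
      have := congrArg Prod.fst hfc
      omega
    · -- al j = 2 : successor is c = f (P+1)
      have heq : C.f (j+1) = C.f (P + 1) :=
        Prod.ext_iff.mpr ⟨by omega, by omega⟩
      have hd := C.hinj _ _ heq
      have hfc : C.f j = C.f P := by
        apply C.f_congr
        have h2 : j - P = (j + 1) - (P + 1) := by ring
        rw [h2]; exact hd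
      have := congrArg Prod.snd hfc
      omega
    all_goals (
      -- al j ∈ {3, 4} : look at the in-edge
      obtain ⟨em1, em2⟩ := fst_snd_edge C (j - 1)
      rw [show j - 1 + 1 = j by ring] at em1 em2
      have hrm := C.hrange (j - 1)
      rcases rhoPow_vals hrm.1 hrm.2 with ⟨h',e'⟩|⟨h',e'⟩|⟨h',e'⟩|⟨h',e'⟩|⟨h',e'⟩ <;>
        rw [e'] at em1 em2 <;> norm_num at em1 em2)
    -- now 10 cases: al j = 3 with μ = 0..4, then al j = 4 with μ = 0..4
    case _ => -- (3, 0): +2 corner turn from 0 to 3: |3-0| ≤ 1 false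
      have habs := h1 (j - 1)
      rw [show j - 1 + 1 = j by ring, abs_le] at habs
      omega
    case _ => -- (3, 1)
      have habs := h1 (j - 1)
      rw [show j - 1 + 1 = j by ring, abs_le] at habs
      omega
    case _ => -- (3, 2): a genuine (2,3)-corner at lower row: contradict minimality
      set jn := (j % (C.L:ℤ)).toNat with hjn
      obtain ⟨hr0, hr1⟩ := emod_bounds hL0 j
      have hjnc : (jn:ℤ) = j % (C.L:ℤ) := Int.toNat_of_nonneg hr0
      have hdvd : (C.L:ℤ) ∣ (jn:ℤ) - j := by
        rw [hjnc]
        have := emod_dvd_sub (C.L:ℤ) j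
        have h2 : j % (C.L:ℤ) - j = -(j - j % (C.L:ℤ)) := by ring
        rw [h2]; exact dvd_neg.mpr this
      have hmem : jn ∈ S := by
        refine Finset.mem_filter.mpr ⟨Finset.mem_range.mpr ?_, ?_, ?_⟩
        · have : (jn:ℤ) < (C.L:ℤ) := by rw [hjnc]; exact hr1
          exact_mod_cast this
        · have : C.al ((jn:ℤ) - 1) = C.al (j - 1) := by
            apply C.al_congr
            have h2 : ((jn:ℤ) - 1) - (j - 1) = (jn:ℤ) - j := by ring
            rw [h2]; exact hdvd
          rw [this, h']
        · have : C.al (jn:ℤ) = C.al j := C.al_congr hdvd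
          rw [this, h]
      have hfeq : C.f (jn:ℤ) = C.f j := C.f_congr hdvd
      have := hmin jn hmem
      rw [hfeq] at this
      omega
    case _ => -- (3, 3): predecessor is a = f(P-1)
      have heq : C.f (j-1) = C.f (P - 1) :=
        Prod.ext_iff.mpr ⟨by omega, by omega⟩
      have hd := C.hinj _ _ heq
      have hfc : C.f j = C.f P := by
        apply C.f_congr
        have h2 : j - P = (j - 1) - (P - 1) := by ring
        rw [h2]; exact hd
      have := congrArg Prod.snd hfc
      omega
    case _ => -- (3, 4): predecessor is v
      have heq : C.f (j-1) = C.f P :=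
        Prod.ext_iff.mpr ⟨by omega, by omega⟩
      have hd := C.hinj _ _ heq
      have hfc : C.f j = C.f (P + 1) := by
        apply C.f_congr
        have h2 : j - (P + 1) = (j - 1) - P := by ring
        rw [h2]; exact hd
      have := congrArg Prod.fst hfc
      omega
    case _ => -- (4, 0)
      have habs := h1 (j - 1)
      rw [show j - 1 + 1 = j by ring, abs_le] at habs
      omega
    case _ => -- (4, 1)
      have habs := h1 (j - 1)
      rw [show j - 1 + 1 = j by ring, abs_le] at habs
      omega
    case _ => -- (4, 2)
      have habs := h1 (j - 1)
      rw [show j - 1 + 1 = j by ring, abs_le] at habs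
      omega
    case _ => -- (4, 3): predecessor is a = f(P-1)
      have heq : C.f (j-1) = C.f (P - 1) :=
        Prod.ext_iff.mpr ⟨by omega, by omega⟩
      have hd := C.hinj _ _ heq
      have hfc : C.f j = C.f P := by
        apply C.f_congr
        have h2 : j - P = (j - 1) - (P - 1) := by ring
        rw [h2]; exact hd
      have := congrArg Prod.snd hfc
      omega
    case _ => -- (4, 4): predecessor is v
      have heq : C.f (j-1) = C.f P :=
        Prod.ext_iff.mpr ⟨by omega, by omega⟩
      have hd := C.hinj _ _ heq
      have hfc : C.f j = C.f (P + 1) := by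
        apply C.f_congr
        have h2 : j - (P + 1) = (j - 1) - P := by ring
        rw [h2]; exact hd
      have := congrArg Prod.fst hfc
      omega
  -- rotate so that the corner vertex sits at index 1
  set D := C.rotC (P - 1) with hD
  have hD20 : D.al 0 = 2 := by
    show C.al (0 + (P - 1)) = 2
    rw [show (0:ℤ) + (P - 1) = P - 1 by ring]; exact hp₀2
  have hD31 : D.al 1 = 3 := by
    show C.al (1 + (P - 1)) = 3
    rw [show (1:ℤ) + (P - 1) = P by ring]; exact hp₀3
  have hD1 : ∀ i, |D.al (i + 1) - D.al i| ≤ 1 := by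
    intro i
    show |C.al (i + 1 + (P - 1)) - C.al (i + (P - 1))| ≤ 1
    rw [show i + 1 + (P - 1) = (i + (P - 1)) + 1 by ring]
    exact h1 _
  have hDfree : ∀ j, D.f j ≠ D.f 1 - ((0:ℤ), (1:ℤ)) := by
    intro j
    show C.f (j + (P - 1)) ≠ C.f (1 + (P - 1)) - ((0:ℤ), (1:ℤ))
    rw [show (1:ℤ) + (P - 1) = P by ring]
    exact hfreeC _
  obtain ⟨C', hC'L, hC'f⟩ := swapC D (by exact hL) hD20 hD31 hD1 hDfree
  have hDL : D.L = C.L := rfl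
  refine ⟨C', hC'L.trans hDL, ?_, ?_⟩
  · -- rows stay above A
    intro i
    rw [hC'f i]
    by_cases h : i % ((D.L:ℤ)) = 1
    · rw [if_pos h]
      show A ≤ (D.f 1 - ((0:ℤ),(1:ℤ))).2
      have : (D.f 1 - ((0:ℤ),(1:ℤ))).2 = (D.f 1).2 - 1 := by simp
      rw [this]
      show A ≤ (C.f (1 + (P-1))).2 - 1
      rw [show (1:ℤ) + (P - 1) = P by ring]
      have := hA (P - 1)
      omega
    · rw [if_neg h]
      exact hA _
  · -- the sum drops by exactly 1
    have hsum1 : ∀ n : ℕ, n ∈ Finset.range C.L →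
        ((C'.f (n:ℤ)).2 - A) = ((D.f (n:ℤ)).2 - A) - (if n = 1 then 1 else 0) := by
      intro n hn
      have hnL : (n:ℤ) < (C.L:ℤ) := by exact_mod_cast Finset.mem_range.mp hn
      have hmod : (n:ℤ) % ((D.L:ℤ)) = (n:ℤ) :=
        Int.emod_eq_of_lt (by exact_mod_cast Nat.zero_le n) (by rw [hDL]; exact hnL)
      rw [hC'f (n:ℤ), hmod]
      by_cases h : n = 1
      · rw [if_pos (by rw [h]; norm_num : (n:ℤ) = 1), if_pos h, h]
        have hsub : (D.f 1 - ((0:ℤ),(1:ℤ))).2 = (D.f 1).2 - 1 := by simp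
        rw [hsub]
        ring
      · rw [if_neg (by exact_mod_cast h : ¬ (n:ℤ) = 1), if_neg h]
        ring
    have hite : ∑ n ∈ Finset.range C.L, (if n = 1 then (1:ℤ) else 0) = 1 := by
      rw [Finset.sum_ite_eq' (Finset.range C.L) 1 (fun _ => (1:ℤ))]
      rw [if_pos (Finset.mem_range.mpr (by omega))]
    have hshift : ∑ n ∈ Finset.range C.L, ((D.f (n:ℤ)).2 - A)
        = ∑ n ∈ Finset.range C.L, ((C.f (n:ℤ)).2 - A) := by
      have := sum_shift (L := C.L) (P - 1) (fun z => (C.f z).2 - A)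
        (fun i => by show (C.f (i + (C.L:ℤ))).2 - A = (C.f i).2 - A; rw [C.hperf])
      exact this
    rw [hC'L]
    show (∑ n ∈ Finset.range C.L, ((C'.f (n:ℤ)).2 - A))
      = (∑ n ∈ Finset.range C.L, ((C.f (n:ℤ)).2 - A)) - 1
    rw [Finset.sum_congr rfl hsum1, Finset.sum_sub_distrib, hite, hshift]

lemma rhoPow_sub_three (t : ℤ) : rhoPow (t - 3) = - rhoPow t := by
  have h := rhoPow_add_three (t - 3)
  rw [show t - 3 + 3 = t by ring] at h
  linear_combination h

lemma rhoPow_mem_unitVecs (t : ℤ) : rhoPow t ∈ unitVecs := by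
  rcases six_cases t with h|h|h|h|h|h <;> simp [rhoPow, h, unitVecs]

theorem no_ccurve (C : CCurve) : False := by
  suffices H : ∀ N : ℕ, ∀ C : CCurve, C.L ≤ N → False from H C.L C le_rfl
  intro N
  induction N with
  | zero => intro C h; have := C.hL; omega
  | succ N ihN =>
    intro C hCL
    by_cases hsm : C.L ≤ 3
    · exact no_small C hsm
    push_neg at hsm
    have hL4 : 4 ≤ C.L := hsm
    -- lower bound on the rows
    have hAex : ∃ A : ℤ, ∀ i : ℤ, A ≤ (C.f i).2 := by
      have hne : ((Finset.range C.L).image (fun m : ℕ => (C.f (m:ℤ)).2)).Nonempty := by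
        refine Finset.Nonempty.image ⟨0, Finset.mem_range.mpr (by omega)⟩ _
      refine ⟨((Finset.range C.L).image (fun m : ℕ => (C.f (m:ℤ)).2)).min' hne, ?_⟩
      intro i
      have hL0 : (0:ℤ) < (C.L:ℤ) := by exact_mod_cast (by omega : 0 < C.L)
      obtain ⟨h0, h1'⟩ := emod_bounds hL0 i
      have heq : C.f ((i % (C.L:ℤ)).toNat : ℤ) = C.f i := by
        apply C.f_congr
        rw [Int.toNat_of_nonneg h0]
        have := emod_dvd_sub (C.L:ℤ) i
        have h2 : i % (C.L:ℤ) - i = -(i - i % (C.L:ℤ)) := by ring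
        rw [h2]; exact dvd_neg.mpr this
      rw [← heq]
      apply Finset.min'_le
      apply Finset.mem_image_of_mem
      refine Finset.mem_range.mpr ?_
      have : ((i % (C.L:ℤ)).toNat : ℤ) < (C.L:ℤ) := by rw [Int.toNat_of_nonneg h0]; exact h1'
      exact_mod_cast this
    obtain ⟨A, hA⟩ := hAex
    -- inner induction on the row-sum measure
    have inner : ∀ n : ℕ, ∀ D : CCurve, D.L = C.L → (∀ i, A ≤ (D.f i).2) →
        (∑ m ∈ Finset.range D.L, ((D.f (m:ℤ)).2 - A)) ≤ (n:ℤ) → False := by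
      intro n
      induction n with
      | zero =>
        intro D hDL hDA hsum
        by_cases hcor : ∃ i : ℤ, |D.al (i + 1) - D.al i| = 2
        · obtain ⟨i, hi⟩ := hcor
          set E := D.rotC (i - ((D.L:ℤ) - 2)) with hE
          have hEcor : |E.al ((E.L:ℤ) - 1) - E.al ((E.L:ℤ) - 2)| = 2 := by
            show |D.al ((D.L:ℤ) - 1 + (i - ((D.L:ℤ) - 2))) -
              D.al ((D.L:ℤ) - 2 + (i - ((D.L:ℤ) - 2)))| = 2
            rw [show (D.L:ℤ) - 1 + (i - ((D.L:ℤ) - 2)) = i + 1 by ring,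
                show (D.L:ℤ) - 2 + (i - ((D.L:ℤ) - 2)) = i by ring]
            exact hi
          obtain ⟨C2, hC2⟩ := cutC E (by show 4 ≤ D.L; omega) hEcor
          have hC2L : C2.L + 1 = D.L := hC2
          exact ihN C2 (by omega)
        · push_neg at hcor
          have hD1 : ∀ i, |D.al (i + 1) - D.al i| ≤ 1 := fun i => by
            have h2 := D.hdiff i
            have h3 := hcor i
            have h4 := abs_nonneg (D.al (i + 1) - D.al i)
            omega
          obtain ⟨C', h'L, h'A, h'sum⟩ := swap_step D (by omega) hD1 A hDA
          have hnn : 0 ≤ ∑ m ∈ Finset.range C'.L, ((C'.f (m:ℤ)).2 - A) :=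
            Finset.sum_nonneg (fun m _ => by have := h'A ((m:ℕ):ℤ); omega)
          omega
      | succ n ihn =>
        intro D hDL hDA hsum
        by_cases hcor : ∃ i : ℤ, |D.al (i + 1) - D.al i| = 2
        · obtain ⟨i, hi⟩ := hcor
          set E := D.rotC (i - ((D.L:ℤ) - 2)) with hE
          have hEcor : |E.al ((E.L:ℤ) - 1) - E.al ((E.L:ℤ) - 2)| = 2 := by
            show |D.al ((D.L:ℤ) - 1 + (i - ((D.L:ℤ) - 2))) -
              D.al ((D.L:ℤ) - 2 + (i - ((D.L:ℤ) - 2)))| = 2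
            rw [show (D.L:ℤ) - 1 + (i - ((D.L:ℤ) - 2)) = i + 1 by ring,
                show (D.L:ℤ) - 2 + (i - ((D.L:ℤ) - 2)) = i by ring]
            exact hi
          obtain ⟨C2, hC2⟩ := cutC E (by show 4 ≤ D.L; omega) hEcor
          have hC2L : C2.L + 1 = D.L := hC2
          exact ihN C2 (by omega)
        · push_neg at hcor
          have hD1 : ∀ i, |D.al (i + 1) - D.al i| ≤ 1 := fun i => by
            have h2 := D.hdiff i
            have h3 := hcor i
            have h4 := abs_nonneg (D.al (i + 1) - D.al i)
            omega
          obtain ⟨C', h'L, h'A, h'sum⟩ := swap_step D (by omega) hD1 A hDA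
          refine ihn C' (h'L.trans hDL) h'A ?_
          rw [h'sum]
          rw [h'L] at *
          push_cast
          omega
    -- start the inner induction
    have hnn : 0 ≤ ∑ m ∈ Finset.range C.L, ((C.f (m:ℤ)).2 - A) :=
      Finset.sum_nonneg (fun m _ => by have := hA ((m:ℕ):ℤ); omega)
    exact inner (∑ m ∈ Finset.range C.L, ((C.f (m:ℤ)).2 - A)).toNat C rfl hA
      (by rw [Int.toNat_of_nonneg hnn])


/-- the invariant carried along reachability -/
def Inv (n : ℕ) (s : ℕ) (c : Config n) : Prop :=
  (∀ m, m + 1 < n → 0 ≤ c.st m ∧ c.st m ≤ (s:ℤ) ∧ dir c m = rhoPow ((s:ℤ) - c.st m)) ∧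
  (∀ m, m + 2 < n → |((s:ℤ) - c.st (m+1)) - ((s:ℤ) - c.st m)| ≤ 2)

lemma inv_init (n s : ℕ) : Inv n s (lineInit n (s:ℤ)) := by
  constructor
  · intro m hm
    have hst : (lineInit n (s:ℤ)).st m = (s:ℤ) := by
      show (if m + 1 = n then (0:ℤ) else (s:ℤ)) = (s:ℤ)
      rw [if_neg (by omega)]
    refine ⟨by rw [hst]; positivity, by rw [hst], ?_⟩
    rw [hst]
    show ((((m+1 : ℕ)):ℤ), (0:ℤ)) - (((m:ℕ):ℤ), (0:ℤ)) = rhoPow ((s:ℤ) - (s:ℤ))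
    rw [show (s:ℤ) - (s:ℤ) = 0 by ring]
    rw [Prod.mk_sub_mk]
    push_cast
    simp [rhoPow]
  · intro m hm
    have h1 : (lineInit n (s:ℤ)).st m = (s:ℤ) := by
      show (if m + 1 = n then (0:ℤ) else (s:ℤ)) = (s:ℤ); rw [if_neg (by omega)]
    have h2 : (lineInit n (s:ℤ)).st (m+1) = (s:ℤ) := by
      show (if m + 1 + 1 = n then (0:ℤ) else (s:ℤ)) = (s:ℤ); rw [if_neg (by omega)]
    rw [h1, h2]
    simp

lemma inv_step {n s : ℕ} {c c' : Config n} (hInv : Inv n s c) {f : ℕ} (hstep : StepAt c f c') :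
    Inv n s c' := by
  obtain ⟨hf, hst0, hsteq, hposeq⟩ := hstep
  obtain ⟨I1, I2⟩ := hInv
  by_cases hf1 : f + 1 < n
  case neg =>
    -- the last monomer fired: nothing geometric changes
    have hstj : ∀ j, j + 1 < n → c'.st j = c.st j := by
      intro j hj
      rw [hsteq j (by omega)]
      show (if j = f then _ else c.st j) = c.st j
      rw [if_neg (by omega)]
    have hposj : ∀ j, j < n → c'.pos j = c.pos j := by
      intro j hj
      rw [hposeq j hj]
      show (if f < j then _ else c.pos j) = c.pos j
      rw [if_neg (by omega)]
    constructor
    · intro m hm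
      have hd : dir c' m = dir c m := by
        show c'.pos (m+1) - c'.pos m = _
        rw [hposj (m+1) (by omega), hposj m (by omega)]; rfl
      rw [hstj m hm, hd]
      exact I1 m hm
    · intro m hm
      rw [hstj m (by omega), hstj (m+1) (by omega)]
      exact I2 m hm
  case pos =>
    obtain ⟨hge, hle, hdir⟩ := I1 f hf1
    have hpos : 0 < c.st f := lt_of_le_of_ne hge (Ne.symm hst0)
    set a := (s:ℤ) - c.st f with ha
    have hdelta : delta c f = rhoPow (a + 2) := by
      show (if 0 < c.st f then rot (rot (dir c f)) else _) = _
      rw [if_pos hpos, hdir, ← rhoPow_rot, ← rhoPow_rot]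
      rw [show (s:ℤ) - c.st f + 1 + 1 = a + 2 by rw [ha]; ring]
    have hstf' : c'.st f = c.st f - 1 := by
      rw [hsteq f (by omega)]
      show (if f = f then (if 0 < c.st f then c.st f - 1 else _) else _) = _
      rw [if_pos rfl, if_pos hpos]
    have hstj : ∀ j, j < n → j ≠ f → c'.st j = c.st j := by
      intro j hj hne
      rw [hsteq j hj]
      show (if j = f then _ else c.st j) = c.st j
      rw [if_neg hne]
    have hposj : ∀ j, j < n → c'.pos j = (if f < j then c.pos j + delta c f else c.pos j) := by
      intro j hj; exact hposeq j hj
    -- directions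
    have hdir' : ∀ m, m + 1 < n → m ≠ f → dir c' m = dir c m := by
      intro m hm hne
      show c'.pos (m+1) - c'.pos m = dir c m
      rw [hposj (m+1) (by omega), hposj m (by omega)]
      rcases Nat.lt_or_ge f m with h|h
      · rw [if_pos (by omega), if_pos h]
        show c.pos (m+1) + delta c f - (c.pos m + delta c f) = _
        rw [dir]; ring
      · rw [if_neg (by omega), if_neg (by omega)]
        rfl
    have hdirf' : dir c' f = rhoPow (a + 1) := by
      show c'.pos (f+1) - c'.pos f = _
      rw [hposj (f+1) (by omega), hposj f (by omega)]
      rw [if_pos (by omega), if_neg (by omega)]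
      show c.pos (f+1) + delta c f - c.pos f = _
      rw [hdelta]
      have : c.pos (f+1) - c.pos f = rhoPow a := by rw [← hdir]; rfl
      rw [show c.pos (f+1) + rhoPow (a+2) - c.pos f
          = (c.pos (f+1) - c.pos f) + rhoPow (a+2) by ring, this]
      exact rhoPow_add_two a
    refine ⟨?_, ?_⟩
    · intro m hm
      by_cases hmf : m = f
      · subst hmf
        rw [hstf', hdirf']
        refine ⟨by omega, by omega, ?_⟩
        rw [show (s:ℤ) - (c.st m - 1) = a + 1 by rw [ha]; ring]
      · rw [hstj m (by omega) hmf, hdir' m hm hmf]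
        exact I1 m hm
    · intro m hm
      by_cases hm1 : m + 1 = f
      · -- pair (f-1, f)
        subst hm1
        rw [hstj m (by omega) (by omega), hstf']
        have hold := I2 m hm
        rw [abs_le] at hold ⊢
        -- exclude new difference = 3
        by_cases hbad : ((s:ℤ) - (c.st (m+1) - 1)) - ((s:ℤ) - c.st m) = 3
        · exfalso
          -- backtracking: c'.pos (m+2) = c'.pos m
          obtain ⟨_, _, hdm⟩ := I1 m (by omega)
          have hnew : rhoPow (a + 1) = - rhoPow ((s:ℤ) - c.st m) := by
            have : a + 1 = ((s:ℤ) - c.st m) + 3 := by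
              rw [ha]; omega
            rw [this, rhoPow_add_three]
          have e1 : c'.pos (m+1+1) - c'.pos (m+1) = rhoPow (a+1) := hdirf'
          have e2 : c'.pos (m+1) - c'.pos m = rhoPow ((s:ℤ) - c.st m) := by
            have := hdir' m (by omega) (by omega)
            rw [hdm] at this
            exact this
          have : c'.pos (m+2) = c'.pos m := by
            have h3 : c'.pos (m+2) = c'.pos (m+1) + rhoPow (a+1) := by
              have := e1; rw [show m+1+1 = m+2 by ring] at this; linear_combination this
            rw [h3, hnew]
            have h4 : c'.pos (m+1) = c'.pos m + rhoPow ((s:ℤ) - c.st m) := by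
              linear_combination e2
            rw [h4]; ring
          have h5 := c'.pos_inj (m+2) (by omega) m (by omega) this
          omega
        · omega
      · by_cases hm0 : m = f
        · -- pair (f, f+1)
          subst hm0
          rw [hstj (m+1) (by omega) (by omega), hstf']
          have hold := I2 m hm
          rw [abs_le] at hold ⊢
          by_cases hbad : ((s:ℤ) - c.st (m+1)) - ((s:ℤ) - (c.st m - 1)) = -3
          · exfalso
            obtain ⟨_, _, hdm1⟩ := I1 (m+1) (by omega)
            have hnew : rhoPow ((s:ℤ) - c.st (m+1)) = - rhoPow (a + 1) := by
              have he : (s:ℤ) - c.st (m+1) = (a + 1) - 3 := by rw [ha]; omega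
              rw [he, rhoPow_sub_three]
            have e1 : c'.pos (m+1) - c'.pos m = rhoPow (a+1) := hdirf'
            have e2 : c'.pos (m+2) - c'.pos (m+1) = rhoPow ((s:ℤ) - c.st (m+1)) := by
              have h6 := hdir' (m+1) (by omega) (by omega)
              rw [hdm1] at h6
              exact h6
            have : c'.pos (m+2) = c'.pos m := by
              have h7 : c'.pos (m+2) = c'.pos (m+1) + rhoPow ((s:ℤ) - c.st (m+1)) := by
                linear_combination e2
              rw [h7, hnew]
              have h8 : c'.pos (m+1) = c'.pos m + rhoPow (a+1) := by linear_combination e1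
              rw [h8]; ring
            have h5 := c'.pos_inj (m+2) (by omega) m (by omega) this
            omega
          · omega
        · rw [hstj m (by omega) hm0, hstj (m+1) (by omega) hm1]
          exact I2 m hm

lemma inv_reach {n s : ℕ} {c : Config n} (hc : Reachable (lineInit n (s:ℤ)) c) :
    Inv n s c := by
  induction hc with
  | refl => exact inv_init n s
  | tail _ hstep ih =>
    obtain ⟨f, hf⟩ := hstep
    exact inv_step ih hf

lemma noCollision {n s : ℕ} (h4 : s ≤ 4) {c : Config n} (hInv : Inv n s c)
    {t m u : ℕ} (ht : t ≤ m) (hmu : m < u) (hun : u < n)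
    (ha : (s:ℤ) - c.st m = 0 ∨ (s:ℤ) - c.st m = 1)
    (heq : c.pos t = c.pos u + rhoPow (((s:ℤ) - c.st m) + 2)) : False := by
  obtain ⟨I1, I2⟩ := hInv
  have hs4 : ((s:ℕ):ℤ) ≤ 4 := by exact_mod_cast h4
  -- junction degeneracies, needed when the lift of m is 1
  have hu1 : (s:ℤ) - c.st m = 1 → (s:ℤ) - c.st (u-1) ≠ 0 := by
    intro h1 h0
    obtain ⟨_, _, hd⟩ := I1 (u-1) (by omega)
    rw [h0] at hd
    have hd' : c.pos (u-1+1) - c.pos (u-1) = rhoPow 0 := hd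
    rw [show u-1+1 = u by omega] at hd'
    have hpt : c.pos t = c.pos (u-1) := by
      rw [heq, h1]
      have h2 : rhoPow 3 = - rhoPow 0 := by
        have h3 := rhoPow_add_three 0; norm_num at h3 ⊢; rw [h3]
      rw [show (1:ℤ)+2 = 3 by norm_num, h2]
      linear_combination hd'
    have := c.pos_inj t (by omega) (u-1) (by omega) hpt
    have hmt : m = u - 1 := by omega
    rw [hmt] at h1
    omega
  have ht1 : (s:ℤ) - c.st m = 1 → (s:ℤ) - c.st t ≠ 0 := by
    intro h1 h0
    obtain ⟨_, _, hd⟩ := I1 t (by omega)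
    rw [h0] at hd
    have hd' : c.pos (t+1) - c.pos t = rhoPow 0 := hd
    have hpt : c.pos (t+1) = c.pos u := by
      have h2 : rhoPow 3 = - rhoPow 0 := by
        have h3 := rhoPow_add_three 0; norm_num at h3 ⊢; rw [h3]
      have h3 : c.pos (t+1) = c.pos t + rhoPow 0 := by linear_combination hd'
      rw [h3, heq, h1, show (1:ℤ)+2 = 3 by norm_num, h2]
      ring
    have := c.pos_inj (t+1) (by omega) u (by omega) hpt
    have hmt : m = t := by omega
    rw [hmt] at h1
    omega
  -- build the closed curve
  set L : ℕ := u - t + 1 with hLdef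
  have hL2 : 2 ≤ L := by omega
  have hLc : (L:ℤ) = (u:ℤ) - (t:ℤ) + 1 := by rw [hLdef]; push_cast; omega
  have hL0 : (0:ℤ) < (L:ℤ) := by omega
  have hL2' : (2:ℤ) ≤ (L:ℤ) := by omega
  refine no_ccurve ⟨L, fun z => c.pos (t + (z % (L:ℤ)).toNat),
    fun z => if z % (L:ℤ) = (L:ℤ) - 1 then ((s:ℤ) - c.st m) + 2
      else (s:ℤ) - c.st (t + (z % (L:ℤ)).toNat),
    by omega, ?_, ?_, ?_, ?_, ?_, ?_⟩
  · intro z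
    show c.pos (t + ((z + (L:ℤ)) % (L:ℤ)).toNat) = c.pos (t + (z % (L:ℤ)).toNat)
    rw [emod_add_self]
  · intro z
    show (if (z + (L:ℤ)) % (L:ℤ) = (L:ℤ) - 1 then ((s:ℤ) - c.st m) + 2
        else (s:ℤ) - c.st (t + ((z + (L:ℤ)) % (L:ℤ)).toNat))
      = (if z % (L:ℤ) = (L:ℤ) - 1 then ((s:ℤ) - c.st m) + 2
        else (s:ℤ) - c.st (t + (z % (L:ℤ)).toNat))
    rw [emod_add_self]
  · intro z1 z2 h
    obtain ⟨h10, h11⟩ := emod_bounds hL0 z1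
    obtain ⟨h20, h21⟩ := emod_bounds hL0 z2
    have hi1 : t + (z1 % (L:ℤ)).toNat < n := by omega
    have hi2 : t + (z2 % (L:ℤ)).toNat < n := by omega
    have := c.pos_inj _ hi1 _ hi2 h
    have hz : z1 % (L:ℤ) = z2 % (L:ℤ) := by omega
    have d1 := emod_dvd_sub (L:ℤ) z1
    have d2 := emod_dvd_sub (L:ℤ) z2
    have he : z1 - z2 = (z1 - z1 % (L:ℤ)) - (z2 - z2 % (L:ℤ)) := by linarith [hz]
    rw [he]
    exact dvd_sub d1 d2
  · intro z
    obtain ⟨h0, h1⟩ := emod_bounds hL0 z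
    have hsucc := emod_succ hL2' z
    show c.pos (t + ((z+1) % (L:ℤ)).toNat) - c.pos (t + (z % (L:ℤ)).toNat)
      = rhoPow (if z % (L:ℤ) = (L:ℤ) - 1 then ((s:ℤ) - c.st m) + 2
        else (s:ℤ) - c.st (t + (z % (L:ℤ)).toNat))
    by_cases h : z % (L:ℤ) = (L:ℤ) - 1
    · rw [h, if_pos rfl] at hsucc
      have e2 : ((z % (L:ℤ))).toNat = u - t := by omega
      rw [hsucc, if_pos h, e2, show ((0:ℤ)).toNat = 0 from rfl,
        show t + (u - t) = u by omega, show t + 0 = t by omega]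
      linear_combination heq
    · rw [if_neg h] at hsucc
      rw [hsucc, if_neg h]
      have e1 : (z % (L:ℤ) + 1).toNat = (z % (L:ℤ)).toNat + 1 := by omega
      rw [e1, show t + ((z % (L:ℤ)).toNat + 1) = (t + (z % (L:ℤ)).toNat) + 1 by omega]
      obtain ⟨_, _, hd⟩ := I1 (t + (z % (L:ℤ)).toNat) (by omega)
      exact hd
  · intro z
    obtain ⟨h0, h1⟩ := emod_bounds hL0 z
    show 0 ≤ (if z % (L:ℤ) = (L:ℤ) - 1 then ((s:ℤ) - c.st m) + 2
        else (s:ℤ) - c.st (t + (z % (L:ℤ)).toNat)) ∧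
      (if z % (L:ℤ) = (L:ℤ) - 1 then ((s:ℤ) - c.st m) + 2
        else (s:ℤ) - c.st (t + (z % (L:ℤ)).toNat)) ≤ 4
    by_cases h : z % (L:ℤ) = (L:ℤ) - 1
    · rw [if_pos h]
      omega
    · rw [if_neg h]
      obtain ⟨b1, b2, _⟩ := I1 (t + (z % (L:ℤ)).toNat) (by omega)
      omega
  · intro z
    obtain ⟨h0, h1⟩ := emod_bounds hL0 z
    have hsucc := emod_succ hL2' z
    show |(if (z+1) % (L:ℤ) = (L:ℤ) - 1 then ((s:ℤ) - c.st m) + 2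
        else (s:ℤ) - c.st (t + ((z+1) % (L:ℤ)).toNat)) -
      (if z % (L:ℤ) = (L:ℤ) - 1 then ((s:ℤ) - c.st m) + 2
        else (s:ℤ) - c.st (t + (z % (L:ℤ)).toNat))| ≤ 2
    by_cases h : z % (L:ℤ) = (L:ℤ) - 1
    · -- pair (lift m + 2, lift t)
      rw [h, if_pos rfl] at hsucc
      rw [hsucc, if_neg (by omega : ¬ (0:ℤ) = (L:ℤ) - 1), if_pos h]
      
      rw [show ((0:ℤ)).toNat = 0 from rfl, show t + 0 = t by omega]
      obtain ⟨b1, b2, _⟩ := I1 t (by omega)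
      rw [abs_le]
      rcases ha with h'|h'
      · omega
      · have := ht1 h'
        omega
    · rw [if_neg h] at hsucc
      rw [hsucc]
      by_cases h2 : z % (L:ℤ) + 1 = (L:ℤ) - 1
      · -- pair (lift (u-1), lift m + 2)
        rw [if_pos h2, if_neg h]
        have e1 : (z % (L:ℤ)).toNat = u - 1 - t := by omega
        rw [e1, show t + (u - 1 - t) = u - 1 by omega]
        obtain ⟨b1, b2, _⟩ := I1 (u-1) (by omega)
        rw [abs_le]
        rcases ha with h'|h'
        · omega
        · have := hu1 h'
          omega
      · rw [if_neg h2, if_neg h]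
        have e1 : (z % (L:ℤ) + 1).toNat = (z % (L:ℤ)).toNat + 1 := by omega
        rw [e1, show t + ((z % (L:ℤ)).toNat + 1) = (t + (z % (L:ℤ)).toNat) + 1 by omega]
        exact I2 (t + (z % (L:ℤ)).toNat) (by omega)

lemma applicable_low {n s : ℕ} (h4 : s ≤ 4) {c : Config n} (hInv : Inv n s c)
    {m : ℕ} (hm1 : m + 1 < n) (hst : c.st m ≠ 0) (hle : (s:ℤ) - c.st m ≤ 1) :
    Applicable c m := by
  obtain ⟨b1, b2, hd⟩ := hInv.1 m hm1
  have hpos : 0 < c.st m := lt_of_le_of_ne b1 (Ne.symm hst)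
  have ha : (s:ℤ) - c.st m = 0 ∨ (s:ℤ) - c.st m = 1 := by omega
  have hδ : delta c m = rhoPow (((s:ℤ) - c.st m) + 2) := by
    show (if 0 < c.st m then rot (rot (dir c m)) else _) = _
    rw [if_pos hpos, hd, ← rhoPow_rot, ← rhoPow_rot]
    rw [show (s:ℤ) - c.st m + 1 + 1 = (s:ℤ) - c.st m + 2 by ring]
  have hnc : ∀ t' u' : ℕ, t' ≤ m → m < u' → u' < n → c.pos t' ≠ c.pos u' + delta c m := by
    intro t' u' h1 h2 h3 hcol
    rw [hδ] at hcol
    exact noCollision h4 hInv h1 h2 h3 ha hcol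
  refine ⟨⟨nextSt c m, nextPos c m, ?_, ?_, ?_⟩, by omega, hst, fun j _ => rfl, fun j _ => rfl⟩
  · show (if m < 0 then _ else c.pos 0) = ((0:ℤ), (0:ℤ))
    rw [if_neg (by omega)]
    exact c.pos_zero
  · intro j hj
    show (if m < j + 1 then c.pos (j+1) + delta c m else c.pos (j+1)) -
      (if m < j then c.pos j + delta c m else c.pos j) ∈ unitVecs
    rcases Nat.lt_trichotomy j m with h|h|h
    · rw [if_neg (by omega), if_neg (by omega)]
      exact c.step_unit j hj
    · subst h
      rw [if_pos (by omega), if_neg (by omega), hδ]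
      have hsum : c.pos (j+1) + rhoPow ((s:ℤ) - c.st j + 2) - c.pos j
          = rhoPow ((s:ℤ) - c.st j + 1) := by
        have he : c.pos (j+1) - c.pos j = rhoPow ((s:ℤ) - c.st j) := hd
        have h2 := rhoPow_add_two ((s:ℤ) - c.st j)
        rw [show c.pos (j+1) + rhoPow ((s:ℤ) - c.st j + 2) - c.pos j
          = (c.pos (j+1) - c.pos j) + rhoPow ((s:ℤ) - c.st j + 2) by ring, he]
        exact h2
      rw [hsum]
      exact rhoPow_mem_unitVecs _
    · rw [if_pos (by omega), if_pos (by omega)]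
      have : c.pos (j+1) + delta c m - (c.pos j + delta c m) = c.pos (j+1) - c.pos j := by ring
      rw [this]
      exact c.step_unit j hj
  · intro x hx y hy hxy
    simp only [nextPos] at hxy
    by_cases h1 : m < x <;> by_cases h2 : m < y
    · rw [if_pos h1, if_pos h2] at hxy
      exact c.pos_inj x hx y hy (by linear_combination hxy)
    · rw [if_pos h1, if_neg h2] at hxy
      exact absurd (by linear_combination - hxy : c.pos y = c.pos x + delta c m)
        (hnc y x (by omega) h1 hx)
    · rw [if_neg h1, if_pos h2] at hxy
      exact absurd (by linear_combination hxy : c.pos x = c.pos y + delta c m)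
        (hnc x y (by omega) h2 hy)
    · rw [if_neg h1, if_neg h2] at hxy
      exact c.pos_inj x hx y hy hxy

lemma blocked_lift {n s : ℕ} (h1s : 1 ≤ s) (h4 : s ≤ 4) {c : Config n} (hInv : Inv n s c)
    {m : ℕ} (hm1 : m + 1 < n) (hb : Blocked c m) :
    (s:ℤ) - c.st m = 2 ∨ (s:ℤ) - c.st m = 3 := by
  obtain ⟨hmn, hst, hnap⟩ := hb
  obtain ⟨b1, b2, _⟩ := hInv.1 m hm1
  by_contra hcon
  push_neg at hcon
  have hle : (s:ℤ) - c.st m ≤ 1 := by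
    have : (s:ℤ) ≤ 4 := by exact_mod_cast h4
    omega
  exact hnap (applicable_low h4 hInv hm1 hst hle)

/-- Let `1 ≤ s ≤ 4`, let `c` be a reachable configuration of `L^s_n`, let
`m_i` be blocked in `c`, and let `m_j, m_k` (`k ≤ i < j < n`) block the movement of `m_i`,
i.e. `pos m_k = pos m_j + ρ²(d_i)`.  Then among `m_k, …, m_{j-1}` the number of unblocked
monomers is at least half the number of blocked monomers. -/
theorem unblocked_fraction (n s : ℕ) (h1 : 1 ≤ s) (h4 : s ≤ 4)
    (c : Config n) (hc : Reachable (lineInit n (s : ℤ)) c)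
    (i j k : ℕ) (hb : Blocked c i)
    (hk : k ≤ i) (hij : i < j) (hj : j < n)
    (hblock : c.pos k = c.pos j + rot (rot (dir c i))) :
    {m : ℕ | k ≤ m ∧ m < j ∧ Blocked c m}.ncard ≤
      2 * {m : ℕ | k ≤ m ∧ m < j ∧ ¬ Blocked c m}.ncard := by
  classical
  have hInv := inv_reach hc
  have hs4 : ((s:ℕ):ℤ) ≤ 4 := by exact_mod_cast h4
  have hin : i + 1 < n := by omega
  obtain ⟨bi1, bi2, hdi⟩ := hInv.1 i hin
  have hai := blocked_lift h1 h4 hInv hin hb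
  have hv : rot (rot (dir c i)) = rhoPow ((s:ℤ) - c.st i + 2) := by
    rw [hdi, ← rhoPow_rot, ← rhoPow_rot,
      show (s:ℤ) - c.st i + 1 + 1 = (s:ℤ) - c.st i + 2 by ring]
  rw [hv] at hblock
  set W := Finset.Ico k j with hW
  set B := W.filter (fun m => Blocked c m) with hB
  set U := W.filter (fun m => ¬ Blocked c m) with hU
  have hBset : {m : ℕ | k ≤ m ∧ m < j ∧ Blocked c m} = ↑B := by
    ext x
    simp only [hB, hW, Finset.coe_filter, Set.mem_setOf_eq, Finset.mem_Ico]
    tauto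
  have hUset : {m : ℕ | k ≤ m ∧ m < j ∧ ¬ Blocked c m} = ↑U := by
    ext x
    simp only [hU, hW, Finset.coe_filter, Set.mem_setOf_eq, Finset.mem_Ico]
    tauto
  rw [hBset, hUset, Set.ncard_coe_finset, Set.ncard_coe_finset]
  set T := W.filter (fun x => (s:ℤ) - c.st x = 2 ∨ (s:ℤ) - c.st x = 3) with hT
  set Tc := W.filter (fun x => ¬ ((s:ℤ) - c.st x = 2 ∨ (s:ℤ) - c.st x = 3)) with hTc
  set T0 := Tc.filter (fun x => (s:ℤ) - c.st x = 0) with hT0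
  have hxW : ∀ x ∈ W, x + 1 < n := by
    intro x hx
    rw [hW, Finset.mem_Ico] at hx
    omega
  have hBsubT : B ⊆ T := by
    intro x hx
    rw [hB, Finset.mem_filter] at hx
    rw [hT, Finset.mem_filter]
    exact ⟨hx.1, blocked_lift h1 h4 hInv (hxW x hx.1) hx.2⟩
  have hTcsubU : Tc ⊆ U := by
    intro x hx
    rw [hTc, Finset.mem_filter] at hx
    rw [hU, Finset.mem_filter]
    exact ⟨hx.1, fun hbl => hx.2 (blocked_lift h1 h4 hInv (hxW x hx.1) hbl)⟩
  have htel : ∑ x ∈ W, ((c.pos (x+1)).1 - (c.pos x).1) = (c.pos j).1 - (c.pos k).1 := by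
    rw [hW, Finset.sum_Ico_eq_sub _ (by omega : k ≤ j),
      Finset.sum_range_sub (fun x => (c.pos x).1), Finset.sum_range_sub (fun x => (c.pos x).1)]
    ring
  have hval : ∀ x ∈ W, ((c.pos (x+1)).1 - (c.pos x).1)
      = (if (s:ℤ) - c.st x = 2 ∨ (s:ℤ) - c.st x = 3 then -1
         else if (s:ℤ) - c.st x = 0 then 1 else 0) := by
    intro x hx
    obtain ⟨b1, b2, hd⟩ := hInv.1 x (hxW x hx)
    have hcomp : (c.pos (x+1)).1 - (c.pos x).1 = (rhoPow ((s:ℤ) - c.st x)).1 := by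
      have h5 := congrArg Prod.fst hd
      simpa [dir] using h5
    rw [hcomp]
    rcases rhoPow_vals (by omega : (0:ℤ) ≤ (s:ℤ) - c.st x) (by omega) with
      ⟨h,e⟩|⟨h,e⟩|⟨h,e⟩|⟨h,e⟩|⟨h,e⟩ <;> rw [e, h] <;> norm_num
  have hsum2 : ∑ x ∈ W, ((c.pos (x+1)).1 - (c.pos x).1)
      = ∑ x ∈ W, (if (s:ℤ) - c.st x = 2 ∨ (s:ℤ) - c.st x = 3 then (-1:ℤ)
          else if (s:ℤ) - c.st x = 0 then 1 else 0) := Finset.sum_congr rfl hval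
  have hsum3 : ∑ x ∈ W, (if (s:ℤ) - c.st x = 2 ∨ (s:ℤ) - c.st x = 3 then (-1:ℤ)
      else if (s:ℤ) - c.st x = 0 then 1 else 0) = -(T.card:ℤ) + (T0.card:ℤ) := by
    rw [← Finset.sum_filter_add_sum_filter_not W
      (fun x => (s:ℤ) - c.st x = 2 ∨ (s:ℤ) - c.st x = 3)]
    congr 1
    · rw [Finset.sum_congr rfl (fun x hx => if_pos ((Finset.mem_filter.mp hx).2)),
        Finset.sum_const]
      rw [← hT]
      simp
    · rw [Finset.sum_congr rfl (fun x hx => if_neg ((Finset.mem_filter.mp hx).2)), ← hTc]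
      rw [Finset.sum_boole, ← hT0]
  have hbf : (c.pos k).1 = (c.pos j).1 + (rhoPow ((s:ℤ) - c.st i + 2)).1 := by
    have h5 := congrArg Prod.fst hblock
    simpa using h5
  have hv1 : (rhoPow ((s:ℤ) - c.st i + 2)).1 = (if (s:ℤ) - c.st i = 3 then 1 else 0) := by
    rcases hai with h|h <;> rw [h] <;> norm_num [rhoPow]
  have hkey : (T.card : ℤ) = (T0.card : ℤ) + (if (s:ℤ) - c.st i = 3 then 1 else 0) := by
    rw [hsum2, hsum3] at htel
    rw [hbf, hv1] at htel
    rcases hai with h|h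
    · rw [if_neg (by omega)] at htel ⊢
      omega
    · rw [if_pos h] at htel ⊢
      omega
  have hTfull : T.card + Tc.card = W.card :=
    Finset.card_filter_add_card_filter_not _
  have hT0le : T0.card ≤ Tc.card := Finset.card_le_card (Finset.filter_subset _ _)
  have hBle : B.card ≤ T.card := Finset.card_le_card hBsubT
  have hUge : Tc.card ≤ U.card := Finset.card_le_card hTcsubU
  have hWcard : W.card = j - k := Nat.card_Ico k j
  by_cases hTc0 : Tc.card = 0
  · exfalso
    have hT00 : T0.card = 0 := by omega
    have hjk1 : j = k + 1 := by
      rcases hai with h|h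
      · rw [if_neg (by omega), hT00] at hkey
        have : W.card = 0 := by omega
        omega
      · rw [if_pos h, hT00] at hkey
        have : W.card = 1 := by omega
        omega
    have hik : i = k := by omega
    -- dir c k = - rhoPow (lift i + 2), contradiction with dir c k = rhoPow (lift k)
    have hdk : c.pos (k+1) - c.pos k = - rhoPow ((s:ℤ) - c.st i + 2) := by
      rw [← hjk1]
      linear_combination - hblock
    rw [← hik] at hdk
    have hdk2 : dir c i = rhoPow ((s:ℤ) - c.st i + 2 + 3) := by
      rw [rhoPow_add_three]
      have : dir c i = c.pos (i+1) - c.pos i := rfl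
      rw [this]
      exact hdk
    rw [hdi] at hdk2
    have := rhoPow_inj hdk2
    omega
  · have hv1le : (if (s:ℤ) - c.st i = 3 then (1:ℤ) else 0) ≤ 1 := by
      split <;> norm_num
    have hv1ge : (0:ℤ) ≤ (if (s:ℤ) - c.st i = 3 then (1:ℤ) else 0) := by
      split <;> norm_num
    have hTle : T.card ≤ Tc.card + 1 := by
      have := hkey
      omega
    omega

end TuringMachineFolding
end
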